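/- arXiv:2406.05762 — 4 statements merged into one kernel-verified Lean document; each statement's English description precedes it below -/
import Mathlib

section
/- Good-derivative representation of the bad component: if Ψ : ℝ^{1+3} → ℂ⁴ satisfies iγ^μ∂_μΨ = ψ, then [ψ]_− = i(I₄ − ω_bγ⁰γ^b)γ^a G_aΨ, where [ψ]_− = ψ − ω_aγ⁰γ^aψ, ω_a = x_a/|x|, and G_a = ∂_a + ω_a∂_t are the good derivatives. -/
noncomputable section

open MeasureTheory Matrix

/-- Space `ℝ³` with the Euclidean norm. -/
abbrev Sp : Type := EuclideanSpace ℝ (Fin 3)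

section Ops

variable {F : Type} [NormedAddCommGroup F] [NormedSpace ℝ F]

/-- Time derivative `∂_t u`. -/
def ptE (u : ℝ → Sp → F) (t : ℝ) (x : Sp) : F := deriv (fun s => u s x) t

/-- Spatial derivative `∂_{x_i} u`. -/
def pxE (i : Fin 3) (u : ℝ → Sp → F) (t : ℝ) (x : Sp) : F :=
  fderiv ℝ (fun y => u t y) x (EuclideanSpace.single i 1)

/-- Spatial Laplacian `Δu`. -/
def lapE (u : ℝ → Sp → F) (t : ℝ) (x : Sp) : F := ∑ i : Fin 3, pxE i (pxE i u) t x

/-- `(-□)u = ∂_t² u - Δ u`, where `□ = -∂_t² + Δ`. -/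
def negBox (u : ℝ → Sp → F) (t : ℝ) (x : Sp) : F := ptE (ptE u) t x - lapE u t x

/-- Smoothness of a function of `(t,x)`. -/
def Smth (u : ℝ → Sp → F) : Prop := ContDiff ℝ (⊤ : ℕ∞) (fun p : ℝ × Sp => u p.1 p.2)

/-- Rotation vector field `Ω_{ab} = x_a ∂_b - x_b ∂_a`. -/
def rotE (a b : Fin 3) (u : ℝ → Sp → F) (t : ℝ) (x : Sp) : F :=
  x a • pxE b u t x - x b • pxE a u t x

/-- Lorentz boost `L_a = t ∂_a + x_a ∂_t`. -/
def boostE (a : Fin 3) (u : ℝ → Sp → F) (t : ℝ) (x : Sp) : F :=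
  t • pxE a u t x + x a • ptE u t x

/-- Scaling vector field `L_0 = t ∂_t + x^a ∂_a`. -/
def scalE (u : ℝ → Sp → F) (t : ℝ) (x : Sp) : F :=
  t • ptE u t x + ∑ a : Fin 3, x a • pxE a u t x

/-- The ten Klainerman vector fields `Γ = (∂, Ω, L)`. -/
def GF : Fin 10 → (ℝ → Sp → F) → ℝ → Sp → F :=
  ![ptE, pxE 0, pxE 1, pxE 2, rotE 0 1, rotE 0 2, rotE 1 2, boostE 0, boostE 1, boostE 2]

/-- Ordered composition `Γ^{I|S}` of the fields of the word `σ` at the positions in `S`. -/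
def GComp {n : ℕ} (σ : Fin n → Fin 10) (S : Finset (Fin n)) (f : ℝ → Sp → F) : ℝ → Sp → F :=
  (S.sort (· ≤ ·)).foldr (fun i g => GF (σ i) g) f

end Ops

/-- Japanese bracket `⟨p⟩ = (1+p²)^{1/2}`. -/
def jb (p : ℝ) : ℝ := Real.sqrt (1 + p ^ 2)

/-- Null form `Q₀(f,g) = ∂_t f ∂_t g - ∇f·∇g` (real-valued). -/
def Q0R (f g : ℝ → Sp → ℝ) (t : ℝ) (x : Sp) : ℝ :=
  ptE f t x * ptE g t x - ∑ a : Fin 3, pxE a f t x * pxE a g t x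

/-- Null form `Q₀(f,g)` (complex-valued). -/
def Q0C (f g : ℝ → Sp → ℂ) (t : ℝ) (x : Sp) : ℂ :=
  ptE f t x * ptE g t x - ∑ a : Fin 3, pxE a f t x * pxE a g t x

/-- `|∂u| = (Σ_{α=0}^3 |∂_α u|²)^{1/2}`. -/
def DNormR (u : ℝ → Sp → ℝ) (t : ℝ) (x : Sp) : ℝ :=
  Real.sqrt ((ptE u t x) ^ 2 + ∑ i : Fin 3, (pxE i u t x) ^ 2)

/-- `Σ_k |Γ_k u|`, the sum of absolute values of all ten Klainerman fields applied to `u`. -/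
def GammaAbsSum (u : ℝ → Sp → ℝ) (t : ℝ) (x : Sp) : ℝ :=
  |ptE u t x| + (∑ i : Fin 3, |pxE i u t x|) +
    (|rotE 0 1 u t x| + |rotE 0 2 u t x| + |rotE 1 2 u t x|) +
    ∑ a : Fin 3, |boostE a u t x|

/-- `|Γu| = (Σ_k |Γ_k u|²)^{1/2}` (real-valued). -/
def GammaNormR (u : ℝ → Sp → ℝ) (t : ℝ) (x : Sp) : ℝ :=
  Real.sqrt ((ptE u t x) ^ 2 + (∑ i : Fin 3, (pxE i u t x) ^ 2) +
    ((rotE 0 1 u t x) ^ 2 + (rotE 0 2 u t x) ^ 2 + (rotE 1 2 u t x) ^ 2) +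
    ∑ a : Fin 3, (boostE a u t x) ^ 2)

/-- `|Γu| = (Σ_k |Γ_k u|²)^{1/2}` (complex-valued). -/
def GammaNormC (u : ℝ → Sp → ℂ) (t : ℝ) (x : Sp) : ℝ :=
  Real.sqrt (‖ptE u t x‖ ^ 2 + (∑ i : Fin 3, ‖pxE i u t x‖ ^ 2) +
    (‖rotE 0 1 u t x‖ ^ 2 + ‖rotE 0 2 u t x‖ ^ 2 + ‖rotE 1 2 u t x‖ ^ 2) +
    ∑ a : Fin 3, ‖boostE a u t x‖ ^ 2)

/-- `Σ_{|J|≤1} |∂Γ^J u|`. -/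
def DGam1 (u : ℝ → Sp → ℝ) (t : ℝ) (x : Sp) : ℝ :=
  DNormR u t x + ∑ k : Fin 10, DNormR (GF k u) t x

/-- The four spacetime derivatives `∂_α`, `α = 0,…,3`. -/
def pd4 : Fin 4 → (ℝ → Sp → ℝ) → ℝ → Sp → ℝ := ![ptE, pxE 0, pxE 1, pxE 2]

abbrev C4 : Type := Fin 4 → ℂ

/-- Diagonal entries of the Minkowski metric `η = diag(-1,1,1,1)`. -/
def ηc : Fin 4 → ℂ := fun μ => if μ = 0 then -1 else 1

/-- Clifford relations `γ^μ γ^ν + γ^ν γ^μ = -2η_{μν} I₄`. -/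
def CliffordRel (γ : Fin 4 → Matrix (Fin 4) (Fin 4) ℂ) : Prop :=
  ∀ μ ν, γ μ * γ ν + γ ν * γ μ =
    ((-2 : ℂ) * (if μ = ν then ηc μ else 0)) • (1 : Matrix (Fin 4) (Fin 4) ℂ)

/-- Adjoint relations `(γ^μ)* = -η_{μμ} γ^μ`. -/
def AdjRel (γ : Fin 4 → Matrix (Fin 4) (Fin 4) ℂ) : Prop :=
  ∀ μ, (γ μ)ᴴ = (-ηc μ) • γ μ

/-- The massless Dirac operator `-iγ^μ ∂_μ`. -/
def diracOp (γ : Fin 4 → Matrix (Fin 4) (Fin 4) ℂ) (ψ : ℝ → Sp → C4) (t : ℝ) (x : Sp) : C4 :=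
  (-Complex.I) • ((γ 0).mulVec (ptE ψ t x) + ∑ a : Fin 3, (γ a.succ).mulVec (pxE a ψ t x))

/-- Modified rotation `Ω̂_{ab} = Ω_{ab} - (1/2)γ^a γ^b`. -/
def hatRotE (γ : Fin 4 → Matrix (Fin 4) (Fin 4) ℂ) (a b : Fin 3)
    (ψ : ℝ → Sp → C4) (t : ℝ) (x : Sp) : C4 :=
  rotE a b ψ t x - (1 / 2 : ℂ) • ((γ a.succ * γ b.succ).mulVec (ψ t x))

/-- Modified boost `L̂_a = L_a - (1/2)γ⁰ γ^a`. -/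
def hatBoostE (γ : Fin 4 → Matrix (Fin 4) (Fin 4) ℂ) (a : Fin 3)
    (ψ : ℝ → Sp → C4) (t : ℝ) (x : Sp) : C4 :=
  boostE a ψ t x - (1 / 2 : ℂ) • ((γ 0 * γ a.succ).mulVec (ψ t x))

/-- `|Γ̂ψ| = (Σ_k |Γ̂_k ψ|²)^{1/2}` over the ten modified fields. -/
def hatGammaNorm (γ : Fin 4 → Matrix (Fin 4) (Fin 4) ℂ)
    (ψ : ℝ → Sp → C4) (t : ℝ) (x : Sp) : ℝ :=
  Real.sqrt (‖ptE ψ t x‖ ^ 2 + (∑ i : Fin 3, ‖pxE i ψ t x‖ ^ 2) +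
    (‖hatRotE γ 0 1 ψ t x‖ ^ 2 + ‖hatRotE γ 0 2 ψ t x‖ ^ 2 + ‖hatRotE γ 1 2 ψ t x‖ ^ 2) +
    ∑ a : Fin 3, ‖hatBoostE γ a ψ t x‖ ^ 2)

/-- `|∂ψ| = (Σ_α |∂_α ψ|²)^{1/2}` for `ℂ⁴`-valued `ψ`. -/
def DNormC4 (ψ : ℝ → Sp → C4) (t : ℝ) (x : Sp) : ℝ :=
  Real.sqrt (‖ptE ψ t x‖ ^ 2 + ∑ i : Fin 3, ‖pxE i ψ t x‖ ^ 2)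

/-- `ω_a = x_a / |x|`. -/
def omg (x : Sp) (a : Fin 3) : ℝ := x a / ‖x‖

/-- The Dirac bilinear `φ₁* γ⁰ φ₂`. -/
def dform (γ : Fin 4 → Matrix (Fin 4) (Fin 4) ℂ) (φ₁ φ₂ : C4) : ℂ :=
  star φ₁ ⬝ᵥ (γ 0).mulVec φ₂

/-- `[φ]₋ = φ - ω_a γ⁰γ^a φ`. -/
def projMinus (γ : Fin 4 → Matrix (Fin 4) (Fin 4) ℂ) (x : Sp) (φ : C4) : C4 :=
  φ - ∑ a : Fin 3, ((omg x a : ℝ) : ℂ) • ((γ 0 * γ a.succ).mulVec φ)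

/-- `[φ]₊ = φ + ω_a γ⁰γ^a φ`. -/
def projPlus (γ : Fin 4 → Matrix (Fin 4) (Fin 4) ℂ) (x : Sp) (φ : C4) : C4 :=
  φ + ∑ a : Fin 3, ((omg x a : ℝ) : ℂ) • ((γ 0 * γ a.succ).mulVec φ)

/-- Ghost weight `q(r,t) = ∫_{-∞}^{r-t} ⟨s⟩^{-1-2δ} ds`. -/
def qw (δ t r : ℝ) : ℝ := ∫ s in Set.Iic (r - t), (jb s) ^ (-(1 + 2 * δ))

lemma key (γ : Fin 4 → Matrix (Fin 4) (Fin 4) ℂ) (hcl : CliffordRel γ)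
    (c : Fin 3 → ℂ) (hc : ∑ a, c a * c a = 1) :
    ((1 : Matrix (Fin 4) (Fin 4) ℂ) - ∑ b, c b • (γ 0 * γ b.succ)) *
      (γ 0 - ∑ a, c a • γ a.succ) = 0 := by
  have h00 : γ 0 * γ 0 = 1 := by
    have h := hcl 0 0
    have h2 : (2:ℂ) • (γ 0 * γ 0) = (2:ℂ) • (1 : Matrix (Fin 4) (Fin 4) ℂ) := by
      rw [two_smul, h]; norm_num [ηc]
    exact smul_right_injective _ (by norm_num) h2
  have hanti : ∀ a : Fin 3, γ a.succ * γ 0 = -(γ 0 * γ a.succ) := by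
    intro a
    have h := hcl a.succ 0
    rw [if_neg (Fin.succ_ne_zero a)] at h
    simp at h
    linear_combination (norm := abel) h
  have hab : ∀ a b : Fin 3, γ a.succ * γ b.succ + γ b.succ * γ a.succ =
      (if a = b then (-2:ℂ) else 0) • (1 : Matrix (Fin 4) (Fin 4) ℂ) := by
    intro a b
    have h := hcl a.succ b.succ
    simp only [Fin.succ_inj] at h
    by_cases hd : a = b
    · rw [if_pos hd] at h ⊢
      rw [h]; subst hd; norm_num [ηc, Fin.succ_ne_zero]
    · rw [if_neg hd] at h ⊢
      rw [h]; norm_num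
  -- third term
  have h3 : (∑ b, c b • (γ 0 * γ b.succ)) * γ 0 = -(∑ a, c a • γ a.succ) := by
    rw [Finset.sum_mul, ← Finset.sum_neg_distrib]
    refine Finset.sum_congr rfl fun b _ => ?_
    rw [smul_mul_assoc, mul_assoc, hanti, mul_neg, ← mul_assoc, h00, one_mul, smul_neg]
  -- fourth term
  set S : Matrix (Fin 4) (Fin 4) ℂ :=
    ∑ b, ∑ a, (c b * c a) • (γ 0 * (γ b.succ * γ a.succ)) with hS
  have h4 : (∑ b, c b • (γ 0 * γ b.succ)) * (∑ a, c a • γ a.succ) = S := by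
    rw [Finset.sum_mul]
    refine Finset.sum_congr rfl fun b _ => ?_
    rw [Finset.mul_sum]
    refine Finset.sum_congr rfl fun a _ => ?_
    rw [smul_mul_assoc, mul_smul_comm, smul_smul, mul_assoc]
  have hSS : S + S = (-2 : ℂ) • γ 0 := by
    have hswap : S = ∑ b, ∑ a, (c b * c a) • (γ 0 * (γ a.succ * γ b.succ)) := by
      rw [hS, Finset.sum_comm]
      exact Finset.sum_congr rfl fun a _ => Finset.sum_congr rfl fun b _ => by
        rw [mul_comm (c a)]
    calc S + S = ∑ b, ∑ a, (c b * c a) • (γ 0 * (γ b.succ * γ a.succ + γ a.succ * γ b.succ)) := by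
          nth_rewrite 2 [hswap]
          rw [hS, ← Finset.sum_add_distrib]
          refine Finset.sum_congr rfl fun b _ => ?_
          rw [← Finset.sum_add_distrib]
          refine Finset.sum_congr rfl fun a _ => ?_
          rw [← smul_add, ← mul_add]
      _ = ∑ b, (c b * c b) • ((-2:ℂ) • γ 0) := by
          refine Finset.sum_congr rfl fun b _ => ?_
          rw [Finset.sum_eq_single b]
          · rw [hab, if_pos rfl, mul_smul_comm, mul_one]
          · intro a _ ha
            rw [hab, if_neg (fun h => ha h.symm), zero_smul, mul_zero, smul_zero]
          · intro h; exact absurd (Finset.mem_univ b) h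
      _ = (-2 : ℂ) • γ 0 := by
          rw [← Finset.sum_smul, hc, one_smul]
  have hS0 : S = -γ 0 := by
    have : (2:ℂ) • S = (2:ℂ) • (-γ 0) := by
      rw [two_smul, hSS]; simp
    exact smul_right_injective _ (by norm_num) this
  rw [sub_mul, mul_sub, mul_sub, one_mul, one_mul, h3, h4, hS0]
  abel


lemma sum_mulVec' {ι : Type} (s : Finset ι) (A : ι → Matrix (Fin 4) (Fin 4) ℂ) (v : C4) :
    (∑ i ∈ s, A i).mulVec v = ∑ i ∈ s, (A i).mulVec v :=
  map_sum (Matrix.mulVec.addMonoidHomLeft v) A s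

lemma omg_sq_sum (x : Sp) (hx : x ≠ 0) :
    ∑ a : Fin 3, ((omg x a : ℝ) : ℂ) * ((omg x a : ℝ) : ℂ) = 1 := by
  have hn : ‖x‖ ≠ 0 := norm_ne_zero_iff.mpr hx
  have hsum : ∑ a : Fin 3, (x a) ^ 2 = ‖x‖ ^ 2 := by
    rw [EuclideanSpace.norm_eq]
    rw [Real.sq_sqrt (by positivity)]
    simp [sq_abs]
  have hr : ∑ a : Fin 3, omg x a * omg x a = 1 := by
    unfold omg
    have h2 : (∑ a : Fin 3, x a / ‖x‖ * (x a / ‖x‖)) = (∑ a : Fin 3, (x a) ^ 2) / ‖x‖ ^ 2 := by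
      rw [Finset.sum_div]; exact Finset.sum_congr rfl fun a _ => by ring
    rw [h2, hsum, div_self (pow_ne_zero 2 hn)]
  calc ∑ a : Fin 3, ((omg x a : ℝ) : ℂ) * ((omg x a : ℝ) : ℂ)
      = ((∑ a : Fin 3, omg x a * omg x a : ℝ) : ℂ) := by push_cast; rfl
    _ = 1 := by rw [hr]; norm_num

/-- good-derivative representation of the bad component
`[ψ]₋ = i(I₄ - ω_b γ⁰γ^b) γ^a G_a Ψ` when `iγ^μ∂_μ Ψ = ψ`. -/
theorem stmt_14 (γ : Fin 4 → Matrix (Fin 4) (Fin 4) ℂ) (hcl : CliffordRel γ)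
    (Ψ ψ : ℝ → Sp → C4)
    (heq : ∀ t x, Complex.I • ((γ 0).mulVec (ptE Ψ t x) +
        ∑ a : Fin 3, (γ a.succ).mulVec (pxE a Ψ t x)) = ψ t x) :
    ∀ t (x : Sp), x ≠ 0 →
      projMinus γ x (ψ t x) =
        Complex.I •
          (((1 : Matrix (Fin 4) (Fin 4) ℂ) -
              ∑ b : Fin 3, ((omg x b : ℝ) : ℂ) • (γ 0 * γ b.succ)).mulVec
            (∑ a : Fin 3, (γ a.succ).mulVec (pxE a Ψ t x + omg x a • ptE Ψ t x))) := by
  intro t x hx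
  classical
  set c : Fin 3 → ℂ := fun a => ((omg x a : ℝ) : ℂ) with hc
  set M : Matrix (Fin 4) (Fin 4) ℂ :=
    (1 : Matrix (Fin 4) (Fin 4) ℂ) - ∑ b, c b • (γ 0 * γ b.succ) with hM
  have hkey : M * (γ 0 - ∑ a, c a • γ a.succ) = 0 :=
    key γ hcl c (omg_sq_sum x hx)
  have hrs : ∀ (r : ℝ) (v : C4), r • v = ((r : ℂ)) • v := by
    intro r v; funext i
    simp [Complex.real_smul]
  have hL : projMinus γ x (ψ t x) = M.mulVec (ψ t x) := by
    rw [hM, Matrix.sub_mulVec, Matrix.one_mulVec, sum_mulVec']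
    unfold projMinus
    simp only [hc, Matrix.smul_mulVec]
  rw [hL, ← heq t x]
  rw [Matrix.mulVec_smul]
  congr 1
  have hw : (∑ a : Fin 3, (γ a.succ).mulVec (pxE a Ψ t x + omg x a • ptE Ψ t x)) =
      (∑ a : Fin 3, (γ a.succ).mulVec (pxE a Ψ t x)) +
        (∑ a, c a • γ a.succ).mulVec (ptE Ψ t x) := by
    rw [sum_mulVec', ← Finset.sum_add_distrib]
    refine Finset.sum_congr rfl fun a _ => ?_
    rw [Matrix.mulVec_add, hrs, Matrix.mulVec_smul, Matrix.smul_mulVec]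
  rw [hw, Matrix.mulVec_add]
  have hzero : M.mulVec ((γ 0 - ∑ a, c a • γ a.succ).mulVec (ptE Ψ t x)) = 0 := by
    rw [Matrix.mulVec_mulVec, hkey, Matrix.zero_mulVec]
  have hsplit : (γ 0).mulVec (ptE Ψ t x) =
      (∑ a, c a • γ a.succ).mulVec (ptE Ψ t x) +
        (γ 0 - ∑ a, c a • γ a.succ).mulVec (ptE Ψ t x) := by
    rw [← Matrix.add_mulVec]
    have h9 : (∑ a, c a • γ a.succ) + (γ 0 - ∑ a, c a • γ a.succ) = γ 0 := by
      rw [add_comm, sub_add_cancel]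
    rw [h9]
  rw [hsplit]
  simp only [Matrix.mulVec_add]
  rw [hzero]
  abel
end
end

section
/- Nonlinear transformation for the Dirac–Klein-Gordon system: if (ψ, v) solves −iγ^μ∂_μψ = vψ and −□v + v = ψ*γ⁰ψ, and Ψ solves −□Ψ = vψ, then the function Ψ̃ := Ψ + vψ satisfies −□Ψ̃ = (ψ*γ⁰ψ)ψ + iγ^μ v ∂_μ(vψ) + 2Q_0(v,ψ), where Q_0(v,ψ) = ∂_t v ∂_tψ − ∇v·∇ψ. -/
noncomputable section

open MeasureTheory Matrix

namespace S16

variable {F : Type} [NormedAddCommGroup F] [NormedSpace ℝ F]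
variable {G : Type} [NormedAddCommGroup G] [NormedSpace ℝ G]

/-- The joint function on spacetime. -/
def P (u : ℝ → Sp → F) : ℝ × Sp → F := fun p => u p.1 p.2

lemma diffP {u : ℝ → Sp → F} (hu : Smth u) (p : ℝ × Sp) :
    DifferentiableAt ℝ (P u) p := (hu.differentiable (by simp)) p

lemma hasDeriv_t {u : ℝ → Sp → F} (hu : Smth u) (t : ℝ) (x : Sp) :
    HasDerivAt (fun s => u s x) (fderiv ℝ (P u) (t, x) (1, 0)) t := by
  have h1 : HasDerivAt (fun s : ℝ => ((s, x) : ℝ × Sp)) ((1 : ℝ), (0 : Sp)) t :=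
    (hasDerivAt_id t).prodMk (hasDerivAt_const t x)
  exact (diffP hu (t, x)).hasFDerivAt.comp_hasDerivAt t h1

lemma ptE_eq {u : ℝ → Sp → F} (hu : Smth u) (t : ℝ) (x : Sp) :
    ptE u t x = fderiv ℝ (P u) (t, x) (1, 0) := (hasDeriv_t hu t x).deriv

lemma hasFDeriv_x {u : ℝ → Sp → F} (hu : Smth u) (t : ℝ) (x : Sp) :
    HasFDerivAt (fun y => u t y)
      ((fderiv ℝ (P u) (t, x)).comp (ContinuousLinearMap.inr ℝ ℝ Sp)) x :=
  (diffP hu (t, x)).hasFDerivAt.comp x (hasFDerivAt_prodMk_right t x)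

lemma pxE_eq {u : ℝ → Sp → F} (hu : Smth u) (i : Fin 3) (t : ℝ) (x : Sp) :
    pxE i u t x = fderiv ℝ (P u) (t, x) (0, EuclideanSpace.single i 1) := by
  rw [pxE, (hasFDeriv_x hu t x).fderiv]; rfl

lemma smth_ptE {u : ℝ → Sp → F} (hu : Smth u) : Smth (ptE u) := by
  have : (fun p : ℝ × Sp => ptE u p.1 p.2) =
      fun p => fderiv ℝ (P u) p ((1 : ℝ), (0 : Sp)) := by
    funext p; exact ptE_eq hu p.1 p.2
  rw [Smth, this]
  exact (hu.fderiv_right (by simp)).clm_apply contDiff_const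

lemma smth_pxE {u : ℝ → Sp → F} (hu : Smth u) (i : Fin 3) : Smth (pxE i u) := by
  have : (fun p : ℝ × Sp => pxE i u p.1 p.2) =
      fun p => fderiv ℝ (P u) p ((0 : ℝ), EuclideanSpace.single i 1) := by
    funext p; exact pxE_eq hu i p.1 p.2
  rw [Smth, this]
  exact (hu.fderiv_right (by simp)).clm_apply contDiff_const

/-- Second mixed derivatives commute. -/
lemma mixed_symm {u : ℝ → Sp → F} (hu : Smth u) (q : ℝ × Sp) (w₁ w₂ : ℝ × Sp) :
    fderiv ℝ (fun p => fderiv ℝ (P u) p w₂) q w₁ =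
      fderiv ℝ (fun p => fderiv ℝ (P u) p w₁) q w₂ := by
  have hd : Differentiable ℝ (fderiv ℝ (P u)) :=
    (hu.fderiv_right (m := 1) (by exact WithTop.coe_le_coe.mpr (le_top : ((1 + 1 : ℕ) : ℕ∞) ≤ ⊤))).differentiable one_ne_zero
  have hsymm := second_derivative_symmetric
    (f' := fderiv ℝ (P u)) (f'' := fderiv ℝ (fderiv ℝ (P u)) q)
    (fun y => (diffP hu y).hasFDerivAt) (hd q).hasFDerivAt w₁ w₂
  have e : ∀ w : ℝ × Sp, fderiv ℝ (fun p => fderiv ℝ (P u) p w) q =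
      (fderiv ℝ (fderiv ℝ (P u)) q).flip w := by
    intro w
    have := fderiv_clm_apply (𝕜 := ℝ) (hd q) (differentiableAt_const w)
    simp only [fderiv_fun_const, Pi.zero_apply, ContinuousLinearMap.comp_zero, zero_add] at this
    exact this
  rw [e w₂, e w₁]
  simpa using hsymm

end S16
namespace S16

variable {F : Type} [NormedAddCommGroup F] [NormedSpace ℝ F]
variable {G : Type} [NormedAddCommGroup G] [NormedSpace ℝ G]

lemma hasDeriv_t' {u : ℝ → Sp → F} (hu : Smth u) (t : ℝ) (x : Sp) :
    HasDerivAt (fun s => u s x) (ptE u t x) t := by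
  rw [ptE_eq hu]; exact hasDeriv_t hu t x

lemma diffAt_x {u : ℝ → Sp → F} (hu : Smth u) (t : ℝ) (x : Sp) :
    DifferentiableAt ℝ (fun y => u t y) x := (hasFDeriv_x hu t x).differentiableAt

/-- `∂_t ∂_a = ∂_a ∂_t`. -/
lemma ptpx_comm {u : ℝ → Sp → F} (hu : Smth u) (a : Fin 3) (t : ℝ) (x : Sp) :
    ptE (pxE a u) t x = pxE a (ptE u) t x := by
  have e1 : P (pxE a u) = fun p => fderiv ℝ (P u) p ((0 : ℝ), EuclideanSpace.single a 1) := by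
    funext p; exact pxE_eq hu a p.1 p.2
  have e2 : P (ptE u) = fun p => fderiv ℝ (P u) p ((1 : ℝ), (0 : Sp)) := by
    funext p; exact ptE_eq hu p.1 p.2
  rw [ptE_eq (smth_pxE hu a), pxE_eq (smth_ptE hu), e1, e2]
  exact mixed_symm hu (t, x) _ _

/-- `∂_a ∂_b = ∂_b ∂_a`. -/
lemma pxpx_comm {u : ℝ → Sp → F} (hu : Smth u) (a b : Fin 3) (t : ℝ) (x : Sp) :
    pxE a (pxE b u) t x = pxE b (pxE a u) t x := by
  have e1 : P (pxE b u) = fun p => fderiv ℝ (P u) p ((0 : ℝ), EuclideanSpace.single b 1) := by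
    funext p; exact pxE_eq hu b p.1 p.2
  have e2 : P (pxE a u) = fun p => fderiv ℝ (P u) p ((0 : ℝ), EuclideanSpace.single a 1) := by
    funext p; exact pxE_eq hu a p.1 p.2
  rw [pxE_eq (smth_pxE hu b), pxE_eq (smth_pxE hu a), e1, e2]
  exact mixed_symm hu (t, x) _ _

/-- Linearity of `∂_t`. -/
lemma ptE_add {u w : ℝ → Sp → F} (hu : Smth u) (hw : Smth w) (t : ℝ) (x : Sp) :
    ptE (fun s y => u s y + w s y) t x = ptE u t x + ptE w t x :=
  ((hasDeriv_t' hu t x).add (hasDeriv_t' hw t x)).deriv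

lemma pxE_add {u w : ℝ → Sp → F} (hu : Smth u) (hw : Smth w) (i : Fin 3) (t : ℝ) (x : Sp) :
    pxE i (fun s y => u s y + w s y) t x = pxE i u t x + pxE i w t x := by
  show fderiv ℝ (fun y => u t y + w t y) x _ = _
  rw [fderiv_fun_add (diffAt_x hu t x) (diffAt_x hw t x)]; rfl

lemma smth_add {u w : ℝ → Sp → F} (hu : Smth u) (hw : Smth w) :
    Smth (fun s y => u s y + w s y) := ContDiff.add hu hw

/-- Composition with a constant continuous linear map. -/
lemma ptE_clm (L : F →L[ℝ] G) {u : ℝ → Sp → F} (hu : Smth u) (t : ℝ) (x : Sp) :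
    ptE (fun s y => L (u s y)) t x = L (ptE u t x) :=
  (L.hasFDerivAt.comp_hasDerivAt t (hasDeriv_t' hu t x)).deriv

lemma pxE_clm (L : F →L[ℝ] G) {u : ℝ → Sp → F} (hu : Smth u) (i : Fin 3) (t : ℝ) (x : Sp) :
    pxE i (fun s y => L (u s y)) t x = L (pxE i u t x) := by
  show fderiv ℝ (fun y => L (u t y)) x _ = _
  have : (fun y => L (u t y)) = L ∘ (fun y => u t y) := rfl
  rw [this, (L.hasFDerivAt.comp x (diffAt_x hu t x).hasFDerivAt).fderiv]; rfl

lemma smth_clm (L : F →L[ℝ] G) {u : ℝ → Sp → F} (hu : Smth u) :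
    Smth (fun s y => L (u s y)) := L.contDiff.comp hu

/-- Sums. -/
lemma ptE_sum {ι : Type} (s : Finset ι) {u : ι → ℝ → Sp → F} (hu : ∀ i, Smth (u i))
    (t : ℝ) (x : Sp) :
    ptE (fun s' y => ∑ i ∈ s, u i s' y) t x = ∑ i ∈ s, ptE (u i) t x :=
  (HasDerivAt.fun_sum (fun i _ => hasDeriv_t' (hu i) t x)).deriv

lemma pxE_sum {ι : Type} (s : Finset ι) {u : ι → ℝ → Sp → F} (hu : ∀ i, Smth (u i))
    (j : Fin 3) (t : ℝ) (x : Sp) :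
    pxE j (fun s' y => ∑ i ∈ s, u i s' y) t x = ∑ i ∈ s, pxE j (u i) t x := by
  show fderiv ℝ (fun y => ∑ i ∈ s, u i t y) x _ = _
  rw [fderiv_fun_sum (fun i _ => diffAt_x (hu i) t x)]
  simp [pxE]

lemma smth_sum {ι : Type} (s : Finset ι) {u : ι → ℝ → Sp → F} (hu : ∀ i, Smth (u i)) :
    Smth (fun s' y => ∑ i ∈ s, u i s' y) := ContDiff.sum (fun i _ => hu i)

end S16
namespace S16

variable {F : Type} [NormedAddCommGroup F] [NormedSpace ℝ F]

lemma negBox_add {u w : ℝ → Sp → F} (hu : Smth u) (hw : Smth w) (t : ℝ) (x : Sp) :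
    negBox (fun s y => u s y + w s y) t x = negBox u t x + negBox w t x := by
  have h1 : ptE (fun s y => u s y + w s y) = fun s y => ptE u s y + ptE w s y :=
    funext fun s => funext fun y => ptE_add hu hw s y
  have h2 : ∀ i, pxE i (fun s y => u s y + w s y) = fun s y => pxE i u s y + pxE i w s y :=
    fun i => funext fun s => funext fun y => pxE_add hu hw i s y
  simp only [negBox, lapE, h1, h2]
  rw [ptE_add (smth_ptE hu) (smth_ptE hw),
    Finset.sum_congr rfl fun i _ => pxE_add (smth_pxE hu i) (smth_pxE hw i) i t x,
    Finset.sum_add_distrib]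
  abel

lemma rsmul (r : ℝ) (φ : C4) : ((r : ℝ) : ℂ) • φ = r • φ := by
  rw [show ((r : ℝ) : ℂ) = algebraMap ℝ ℂ r from rfl, algebraMap_smul]

/-- Smoothness of `(v : ℂ) • ψ`. -/
lemma smth_smulC {v : ℝ → Sp → ℝ} {ψ : ℝ → Sp → C4} (hv : Smth v) (hψ : Smth ψ) :
    Smth (fun s y => ((v s y : ℝ) : ℂ) • ψ s y) := by
  have h1 : ContDiff ℝ (⊤ : ℕ∞) (fun p : ℝ × Sp => ((v p.1 p.2 : ℝ) : ℂ)) :=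
    Complex.ofRealCLM.contDiff.comp hv
  exact (isBoundedBilinearMap_smul.contDiff (𝕜 := ℝ)).comp (h1.prodMk hψ)

/-- Leibniz rule in time. -/
lemma ptE_smul {v : ℝ → Sp → ℝ} {ψ : ℝ → Sp → C4} (hv : Smth v) (hψ : Smth ψ)
    (t : ℝ) (x : Sp) :
    ptE (fun s y => ((v s y : ℝ) : ℂ) • ψ s y) t x =
      ((ptE v t x : ℝ) : ℂ) • ψ t x + ((v t x : ℝ) : ℂ) • ptE ψ t x := by
  have hc : HasDerivAt (fun s => ((v s x : ℝ) : ℂ)) ((ptE v t x : ℝ) : ℂ) t :=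
    (hasDeriv_t' hv t x).ofReal_comp
  have h := (hc.smul (hasDeriv_t' hψ t x)).deriv
  rw [ptE, show (fun s => ((v s x : ℝ) : ℂ) • ψ s x) =
    (fun s => ((v s x : ℝ) : ℂ)) • (fun s => ψ s x) from rfl, h]; abel

/-- Leibniz rule in space. -/
lemma pxE_smul {v : ℝ → Sp → ℝ} {ψ : ℝ → Sp → C4} (hv : Smth v) (hψ : Smth ψ)
    (i : Fin 3) (t : ℝ) (x : Sp) :
    pxE i (fun s y => ((v s y : ℝ) : ℂ) • ψ s y) t x =
      ((pxE i v t x : ℝ) : ℂ) • ψ t x + ((v t x : ℝ) : ℂ) • pxE i ψ t x := by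
  have hc : HasFDerivAt (fun y => ((v t y : ℝ) : ℂ))
      (Complex.ofRealCLM.comp (fderiv ℝ (fun y => v t y) x)) x :=
    Complex.ofRealCLM.hasFDerivAt.comp x (diffAt_x hv t x).hasFDerivAt
  have h := (hc.smul (diffAt_x hψ t x).hasFDerivAt).fderiv
  show fderiv ℝ (fun y => ((v t y : ℝ) : ℂ) • ψ t y) x _ = _
  rw [show (fun y => ((v t y : ℝ) : ℂ) • ψ t y) =
    (fun y => ((v t y : ℝ) : ℂ)) • (fun y => ψ t y) from rfl, h]
  simp only [ContinuousLinearMap.add_apply, ContinuousLinearMap.smul_apply,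
    ContinuousLinearMap.smulRight_apply, ContinuousLinearMap.comp_apply,
    Complex.ofRealCLM_apply]
  rw [add_comm]; rfl

end S16
namespace S16

/-- Full product rule for `-□` on `(v:ℂ) • ψ`. -/
lemma negBox_smul {v : ℝ → Sp → ℝ} {ψ : ℝ → Sp → C4} (hv : Smth v) (hψ : Smth ψ)
    (t : ℝ) (x : Sp) :
    negBox (fun s y => ((v s y : ℝ) : ℂ) • ψ s y) t x =
      ((negBox v t x : ℝ) : ℂ) • ψ t x + ((v t x : ℝ) : ℂ) • negBox ψ t x +
        (2 : ℝ) • (ptE v t x • ptE ψ t x - ∑ a : Fin 3, pxE a v t x • pxE a ψ t x) := by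
  have h1 : ptE (fun s y => ((v s y : ℝ) : ℂ) • ψ s y)
      = fun s y => ((ptE v s y : ℝ) : ℂ) • ψ s y + ((v s y : ℝ) : ℂ) • ptE ψ s y :=
    funext fun s => funext fun y => ptE_smul hv hψ s y
  have h2 : ∀ i : Fin 3, pxE i (fun s y => ((v s y : ℝ) : ℂ) • ψ s y)
      = fun s y => ((pxE i v s y : ℝ) : ℂ) • ψ s y + ((v s y : ℝ) : ℂ) • pxE i ψ s y :=
    fun i => funext fun s => funext fun y => pxE_smul hv hψ i s y
  simp only [negBox, lapE, h1, h2]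
  rw [ptE_add (smth_smulC (smth_ptE hv) hψ) (smth_smulC hv (smth_ptE hψ)),
    ptE_smul (smth_ptE hv) hψ, ptE_smul hv (smth_ptE hψ),
    Finset.sum_congr rfl fun i (_ : i ∈ Finset.univ) => by
      rw [pxE_add (smth_smulC (smth_pxE hv i) hψ) (smth_smulC hv (smth_pxE hψ i)),
        pxE_smul (smth_pxE hv i) hψ, pxE_smul hv (smth_pxE hψ i)]]
  simp only [rsmul]
  simp only [sub_smul, smul_sub, Finset.sum_smul, Finset.smul_sum,
    Finset.sum_add_distrib, two_smul]
  abel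

end S16
namespace S16

variable {F : Type} [NormedAddCommGroup F] [NormedSpace ℝ F]

/-- `mulVec` as a real continuous linear map on `C4`. -/
def mvL (A : Matrix (Fin 4) (Fin 4) ℂ) : C4 →L[ℝ] C4 :=
  LinearMap.toContinuousLinearMap (A.mulVecLin.restrictScalars ℝ)

@[simp] lemma mvL_apply (A : Matrix (Fin 4) (Fin 4) ℂ) (φ : C4) :
    mvL A φ = A.mulVec φ := rfl

lemma smth_mulVec (A : Matrix (Fin 4) (Fin 4) ℂ) {u : ℝ → Sp → C4} (hu : Smth u) :
    Smth (fun s y => A.mulVec (u s y)) := smth_clm (mvL A) hu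

lemma ptE_mulVec (A : Matrix (Fin 4) (Fin 4) ℂ) {u : ℝ → Sp → C4} (hu : Smth u)
    (t : ℝ) (x : Sp) :
    ptE (fun s y => A.mulVec (u s y)) t x = A.mulVec (ptE u t x) := ptE_clm (mvL A) hu t x

lemma pxE_mulVec (A : Matrix (Fin 4) (Fin 4) ℂ) {u : ℝ → Sp → C4} (hu : Smth u)
    (i : Fin 3) (t : ℝ) (x : Sp) :
    pxE i (fun s y => A.mulVec (u s y)) t x = A.mulVec (pxE i u t x) := pxE_clm (mvL A) hu i t x

lemma ptE_csmul (c : ℂ) {u : ℝ → Sp → C4} (hu : Smth u) (t : ℝ) (x : Sp) :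
    ptE (fun s y => c • u s y) t x = c • ptE u t x :=
  ((hasDeriv_t' hu t x).const_smul c).deriv

lemma pxE_csmul (c : ℂ) {u : ℝ → Sp → C4} (hu : Smth u) (i : Fin 3) (t : ℝ) (x : Sp) :
    pxE i (fun s y => c • u s y) t x = c • pxE i u t x := by
  show fderiv ℝ (fun y => c • u t y) x _ = _
  rw [fderiv_fun_const_smul (diffAt_x hu t x) c]; rfl

section Clifford
variable {γ : Fin 4 → Matrix (Fin 4) (Fin 4) ℂ} (hcl : CliffordRel γ)
include hcl

lemma g00 : γ 0 * γ 0 = 1 := by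
  have h := hcl 0 0
  simp only [if_pos rfl, ηc, if_pos rfl] at h
  have : (2 : ℂ) • (γ 0 * γ 0) = (2 : ℂ) • (1 : Matrix (Fin 4) (Fin 4) ℂ) := by
    rw [two_smul]; rw [h]; norm_num
  exact smul_right_injective _ (by norm_num) this

lemma gcross (a : Fin 3) : γ 0 * γ a.succ + γ a.succ * γ 0 = 0 := by
  have h := hcl 0 a.succ
  rwa [if_neg (Fin.succ_ne_zero a).symm, mul_zero, zero_smul] at h

lemma gclif (a b : Fin 3) : γ a.succ * γ b.succ + γ b.succ * γ a.succ =
    if a = b then ((-2 : ℂ)) • (1 : Matrix (Fin 4) (Fin 4) ℂ) else 0 := by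
  have h := hcl a.succ b.succ
  rw [h]
  by_cases hab : a = b
  · subst hab
    simp [ηc, Fin.succ_ne_zero a]
  · rw [if_neg (fun hs => hab (Fin.succ_injective _ hs)), if_neg hab, mul_zero, zero_smul]

end Clifford

end S16
namespace S16

lemma mulVec_sumC {ι : Type} (s : Finset ι) (A : Matrix (Fin 4) (Fin 4) ℂ) (f : ι → C4) :
    A.mulVec (∑ i ∈ s, f i) = ∑ i ∈ s, A.mulVec (f i) := by
  exact map_sum A.mulVecLin f s

set_option maxHeartbeats 2000000 in
lemma dirac_sq (γ : Fin 4 → Matrix (Fin 4) (Fin 4) ℂ) (hcl : CliffordRel γ)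
    {ψ : ℝ → Sp → C4} (hψ : Smth ψ) (t : ℝ) (x : Sp) :
    diracOp γ (diracOp γ ψ) t x = - negBox ψ t x := by
  classical
  set M := ptE (ptE ψ) t x with hM
  set T := fun b : Fin 3 => ptE (pxE b ψ) t x with hT
  set S := fun a b : Fin 3 => pxE a (pxE b ψ) t x with hS
  have hsum : Smth (fun s y => ∑ a : Fin 3, (γ a.succ).mulVec (pxE a ψ s y)) :=
    smth_sum (u := fun a s y => (γ a.succ).mulVec (pxE a ψ s y)) Finset.univ
      (fun a => smth_mulVec _ (smth_pxE hψ a))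
  have hinner : Smth (fun s y => (γ 0).mulVec (ptE ψ s y) +
      ∑ a : Fin 3, (γ a.succ).mulVec (pxE a ψ s y)) :=
    smth_add (smth_mulVec _ (smth_ptE hψ)) hsum
  have hDeq : diracOp γ ψ = fun s y => (-Complex.I) • ((γ 0).mulVec (ptE ψ s y) +
      ∑ a : Fin 3, (γ a.succ).mulVec (pxE a ψ s y)) := rfl
  have hPt : ptE (diracOp γ ψ) t x =
      (-Complex.I) • ((γ 0).mulVec M + ∑ b : Fin 3, (γ b.succ).mulVec (T b)) := by
    rw [hDeq, ptE_csmul _ hinner, ptE_add (smth_mulVec _ (smth_ptE hψ)) hsum,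
      ptE_mulVec _ (smth_ptE hψ),
      ptE_sum (u := fun a s y => (γ a.succ).mulVec (pxE a ψ s y)) Finset.univ
        (fun a => smth_mulVec _ (smth_pxE hψ a)),
      Finset.sum_congr rfl fun b (_ : b ∈ Finset.univ) => ptE_mulVec _ (smth_pxE hψ b) t x]
  have hPx : ∀ a : Fin 3, pxE a (diracOp γ ψ) t x =
      (-Complex.I) • ((γ 0).mulVec (T a) + ∑ b : Fin 3, (γ b.succ).mulVec (S a b)) := by
    intro a
    rw [hDeq, pxE_csmul _ hinner, pxE_add (smth_mulVec _ (smth_ptE hψ)) hsum,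
      pxE_mulVec _ (smth_ptE hψ),
      pxE_sum (u := fun b s y => (γ b.succ).mulVec (pxE b ψ s y)) Finset.univ
        (fun b => smth_mulVec _ (smth_pxE hψ b)),
      Finset.sum_congr rfl fun b (_ : b ∈ Finset.univ) => pxE_mulVec _ (smth_pxE hψ b) a t x,
      ← ptpx_comm hψ a t x]
  have hcross : (∑ b : Fin 3, (γ 0 * γ b.succ).mulVec (T b)) +
      ∑ a : Fin 3, (γ a.succ * γ 0).mulVec (T a) = 0 := by
    rw [← Finset.sum_add_distrib]
    refine Finset.sum_eq_zero fun b _ => ?_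
    rw [← Matrix.add_mulVec, gcross hcl b, Matrix.zero_mulVec]
  have hswap : (∑ a : Fin 3, ∑ b : Fin 3, (γ a.succ * γ b.succ).mulVec (S a b)) =
      ∑ a : Fin 3, ∑ b : Fin 3, (γ b.succ * γ a.succ).mulVec (S b a) := Finset.sum_comm
  have hdouble : (∑ a : Fin 3, ∑ b : Fin 3, (γ a.succ * γ b.succ).mulVec (S a b)) =
      - ∑ a : Fin 3, S a a := by
    have h2 : (2 : ℂ) • (∑ a : Fin 3, ∑ b : Fin 3, (γ a.succ * γ b.succ).mulVec (S a b)) =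
        (2 : ℂ) • (- ∑ a : Fin 3, S a a) := by
      rw [two_smul]
      nth_rewrite 2 [hswap]
      rw [← Finset.sum_add_distrib]
      have hab : ∀ a : Fin 3, ((∑ b : Fin 3, (γ a.succ * γ b.succ).mulVec (S a b)) +
          ∑ b : Fin 3, (γ b.succ * γ a.succ).mulVec (S b a)) = (-2 : ℂ) • S a a := by
        intro a
        rw [← Finset.sum_add_distrib]
        have hb : ∀ b : Fin 3, (γ a.succ * γ b.succ).mulVec (S a b) +
            (γ b.succ * γ a.succ).mulVec (S b a) =
            if a = b then (-2 : ℂ) • S a b else 0 := by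
          intro b
          have : S b a = S a b := pxpx_comm hψ b a t x
          rw [this, ← Matrix.add_mulVec, gclif hcl a b,
            apply_ite (fun m : Matrix (Fin 4) (Fin 4) ℂ => m.mulVec (S a b)),
            Matrix.zero_mulVec, Matrix.smul_mulVec, Matrix.one_mulVec]
        rw [Finset.sum_congr rfl fun b _ => hb b, Finset.sum_ite_eq]
        simp
      rw [Finset.sum_congr rfl fun a _ => hab a]
      rw [smul_neg, Finset.smul_sum]
      simp [neg_smul]
    exact smul_right_injective _ (two_ne_zero) h2
  have hsum2 : (∑ a : Fin 3, (γ a.succ).mulVec (pxE a (diracOp γ ψ) t x)) =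
      ∑ a : Fin 3, (γ a.succ).mulVec ((-Complex.I) •
        ((γ 0).mulVec (T a) + ∑ b : Fin 3, (γ b.succ).mulVec (S a b))) :=
    Finset.sum_congr rfl fun a _ => by rw [hPx a]
  show diracOp γ (diracOp γ ψ) t x = -(M - ∑ a : Fin 3, S a a)
  rw [diracOp, hPt, hsum2]
  simp only [Matrix.mulVec_smul, Matrix.mulVec_add, mulVec_sumC, Matrix.mulVec_mulVec,
    smul_add, Finset.smul_sum, smul_smul]
  simp only [neg_mul_neg, Complex.I_mul_I, neg_smul, one_smul, neg_neg]
  rw [g00 hcl, Matrix.one_mulVec]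
  simp only [Finset.sum_add_distrib, Finset.sum_neg_distrib]
  rw [hdouble, eq_neg_of_add_eq_zero_left hcross]
  abel

end S16
/-- nonlinear transformation for the Dirac–Klein-Gordon system:
`Ψ̃ = Ψ + vψ` satisfies `-□Ψ̃ = (ψ*γ⁰ψ)ψ + iγ^μ v ∂_μ(vψ) + 2Q₀(v,ψ)`. -/
theorem stmt_16 (γ : Fin 4 → Matrix (Fin 4) (Fin 4) ℂ)
    (hcl : CliffordRel γ) (hadj : AdjRel γ)
    (ψ : ℝ → Sp → C4) (v : ℝ → Sp → ℝ) (Ψ : ℝ → Sp → C4)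
    (hψ : Smth ψ) (hv : Smth v) (hΨ : Smth Ψ)
    (hdirac : ∀ t x, diracOp γ ψ t x = ((v t x : ℝ) : ℂ) • ψ t x)
    (hkg : ∀ t x, ((negBox v t x + v t x : ℝ) : ℂ) = dform γ (ψ t x) (ψ t x))
    (hwave : ∀ t x, negBox Ψ t x = ((v t x : ℝ) : ℂ) • ψ t x) :
    ∀ t x,
      negBox (fun s y => Ψ s y + ((v s y : ℝ) : ℂ) • ψ s y) t x =
        dform γ (ψ t x) (ψ t x) • ψ t x +
          (Complex.I * ((v t x : ℝ) : ℂ)) •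
            ((γ 0).mulVec (ptE (fun s y => ((v s y : ℝ) : ℂ) • ψ s y) t x) +
              ∑ a : Fin 3,
                (γ a.succ).mulVec (pxE a (fun s y => ((v s y : ℝ) : ℂ) • ψ s y) t x)) +
          (2 : ℝ) • (ptE v t x • ptE ψ t x - ∑ a : Fin 3, pxE a v t x • pxE a ψ t x) := by
  intro t x
  have hW : Smth (fun s y => ((v s y : ℝ) : ℂ) • ψ s y) := S16.smth_smulC hv hψ
  have hfun : diracOp γ ψ = fun s y => ((v s y : ℝ) : ℂ) • ψ s y :=
    funext fun s => funext fun y => hdirac s y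
  have hbox : negBox ψ t x = Complex.I •
      ((γ 0).mulVec (ptE (fun s y => ((v s y : ℝ) : ℂ) • ψ s y) t x) +
        ∑ a : Fin 3,
          (γ a.succ).mulVec (pxE a (fun s y => ((v s y : ℝ) : ℂ) • ψ s y) t x)) := by
    have h := S16.dirac_sq γ hcl hψ t x
    rw [hfun, diracOp] at h
    rw [← neg_neg (negBox ψ t x), ← h]
    simp [neg_smul, smul_add]
    abel
  rw [S16.negBox_add hΨ hW t x, hwave t x, S16.negBox_smul hv hψ t x, hbox, ← hkg t x]
  rw [Complex.ofReal_add, add_smul, smul_smul, mul_comm ((v t x : ℝ) : ℂ) Complex.I]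
  abel
end
end

section
/- Nonlinear transformation for the Klein-Gordon component: if (ψ, v) solves −iγ^μ∂_μψ = vψ and V¹ solves −□V¹ + V¹ = ψ*γ⁰ψ, then Ṽ¹ := V¹ − ψ*γ⁰ψ satisfies −□Ṽ¹ + Ṽ¹ = 2v²ψ*γ⁰ψ − 2Q_0(ψ*, γ⁰ψ), where Q_0(ψ*, γ⁰ψ) = ∂_tψ* γ⁰ ∂_tψ − Σ_a ∂_aψ* γ⁰ ∂_aψ. -/
noncomputable section

open MeasureTheory Matrix

namespace Stmt17

abbrev P : Type := ℝ × Sp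

variable {F G : Type} [NormedAddCommGroup F] [NormedSpace ℝ F]
  [NormedAddCommGroup G] [NormedSpace ℝ G]

/-- Joint function of `p = (t,x)`. -/
@[reducible] def tf (u : ℝ → Sp → F) : P → F := fun p => u p.1 p.2

/-- Directional derivative operator in the full space. -/
@[reducible] def Dd (w : P) (U : P → F) : P → F := fun p => fderiv ℝ U p w

/-- Time direction. -/
def w0 : P := ((1 : ℝ), (0 : Sp))

/-- Spatial directions. -/
def ws (i : Fin 3) : P := ((0 : ℝ), EuclideanSpace.single i 1)

lemma Dd_contDiff {U : P → F} (hU : ContDiff ℝ (⊤ : ℕ∞) U) (w : P) : ContDiff ℝ (⊤ : ℕ∞) (Dd w U) :=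
  (ContinuousLinearMap.apply ℝ F w).contDiff.comp (hU.fderiv_right (by simp))

lemma Dd_symm {U : P → F} (hU : ContDiff ℝ (⊤ : ℕ∞) U) (w z : P) (p : P) :
    Dd w (Dd z U) p = Dd z (Dd w U) p := by
  have hd : DifferentiableAt ℝ (fderiv ℝ U) p :=
    ((hU.fderiv_right (m := (⊤ : ℕ∞)) (by simp)).differentiable (by simp)).differentiableAt
  have h1 : ∀ z : P, Dd z U = fun q => (ContinuousLinearMap.apply ℝ F z) (fderiv ℝ U q) :=
    fun z => rfl
  have h2 : ∀ w z : P, Dd w (Dd z U) p = fderiv ℝ (fderiv ℝ U) p w z := by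
    intro w z
    have h3 := ((ContinuousLinearMap.apply ℝ F z).hasFDerivAt.comp p hd.hasFDerivAt).fderiv
    have h4 : (fun q => (ContinuousLinearMap.apply ℝ F z) (fderiv ℝ U q))
        = (⇑(ContinuousLinearMap.apply ℝ F z) ∘ fderiv ℝ U) := rfl
    simp only [Dd, h1 z, h4, h3]; rfl
  rw [h2, h2]
  exact (hU.contDiffAt.isSymmSndFDerivAt (by rw [minSmoothness_of_isRCLikeNormedField]; exact WithTop.coe_le_coe.mpr le_top)) w z

lemma ptE_eq {u : ℝ → Sp → F} (hu : Smth u) (t : ℝ) (x : Sp) :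
    ptE u t x = Dd w0 (tf u) (t, x) := by
  have hU : HasFDerivAt (tf u) (fderiv ℝ (tf u) (t, x)) (t, x) :=
    ((hu.differentiable (by simp)) (t, x)).hasFDerivAt
  have hline : HasFDerivAt (fun s : ℝ => ((s, x) : P))
      ((ContinuousLinearMap.id ℝ ℝ).prod 0) t :=
    (hasFDerivAt_id t).prodMk (hasFDerivAt_const x t)
  have h := (hU.comp t hline).hasDerivAt
  have : deriv (fun s => u s x) t
      = ((fderiv ℝ (tf u) (t, x)).comp ((ContinuousLinearMap.id ℝ ℝ).prod 0)) 1 := h.deriv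
  simp only [ptE, this, Dd, w0]
  rfl

lemma pxE_eq {u : ℝ → Sp → F} (hu : Smth u) (i : Fin 3) (t : ℝ) (x : Sp) :
    pxE i u t x = Dd (ws i) (tf u) (t, x) := by
  have hU : HasFDerivAt (tf u) (fderiv ℝ (tf u) (t, x)) (t, x) :=
    ((hu.differentiable (by simp)) (t, x)).hasFDerivAt
  have hline : HasFDerivAt (fun y : Sp => ((t, y) : P))
      ((0 : Sp →L[ℝ] ℝ).prod (ContinuousLinearMap.id ℝ Sp)) x :=
    (hasFDerivAt_const t x).prodMk (hasFDerivAt_id x)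
  have h := hU.comp x hline
  simp only [pxE]
  rw [show (fun y : Sp => u t y) = (tf u ∘ Prod.mk t) from rfl, h.fderiv]
  simp only [Dd, ws, ContinuousLinearMap.comp_apply, ContinuousLinearMap.prod_apply,
    ContinuousLinearMap.zero_apply, ContinuousLinearMap.coe_id', id_eq]

lemma tf_ptE {u : ℝ → Sp → F} (hu : Smth u) : tf (ptE u) = Dd w0 (tf u) :=
  funext fun p => ptE_eq hu p.1 p.2

lemma tf_pxE {u : ℝ → Sp → F} (hu : Smth u) (i : Fin 3) : tf (pxE i u) = Dd (ws i) (tf u) :=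
  funext fun p => pxE_eq hu i p.1 p.2

lemma Smth_ptE {u : ℝ → Sp → F} (hu : Smth u) : Smth (ptE u) := by
  show ContDiff ℝ (⊤ : ℕ∞) (tf (ptE u)); rw [tf_ptE hu]; exact Dd_contDiff hu w0

lemma Smth_pxE {u : ℝ → Sp → F} (hu : Smth u) (i : Fin 3) : Smth (pxE i u) := by
  show ContDiff ℝ (⊤ : ℕ∞) (tf (pxE i u)); rw [tf_pxE hu i]; exact Dd_contDiff hu (ws i)

lemma negBox_eq {u : ℝ → Sp → F} (hu : Smth u) (t : ℝ) (x : Sp) :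
    negBox u t x = Dd w0 (Dd w0 (tf u)) (t, x) - ∑ i : Fin 3, Dd (ws i) (Dd (ws i) (tf u)) (t, x) := by
  have h1 : ptE (ptE u) t x = Dd w0 (Dd w0 (tf u)) (t, x) := by
    rw [ptE_eq (Smth_ptE hu) t x, tf_ptE hu]
  have h2 : ∀ i : Fin 3, pxE i (pxE i u) t x = Dd (ws i) (Dd (ws i) (tf u)) (t, x) := by
    intro i; rw [pxE_eq (Smth_pxE hu i) i t x, tf_pxE hu i]
  simp only [negBox, lapE, h1]
  congr 1
  exact Finset.sum_congr rfl fun i _ => h2 i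


lemma Dd_sub {f g : P → F} (hf : Differentiable ℝ f) (hg : Differentiable ℝ g) (w p : P) :
    Dd w (fun q => f q - g q) p = Dd w f p - Dd w g p := by
  simp only [Dd, fderiv_fun_sub (hf p) (hg p), ContinuousLinearMap.sub_apply]

lemma Dd_add {f g : P → F} (hf : Differentiable ℝ f) (hg : Differentiable ℝ g) (w p : P) :
    Dd w (fun q => f q + g q) p = Dd w f p + Dd w g p := by
  simp only [Dd, fderiv_fun_add (hf p) (hg p), ContinuousLinearMap.add_apply]

lemma Dd_sum {n : ℕ} {f : Fin n → P → F} (hf : ∀ i, Differentiable ℝ (f i)) (w p : P) :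
    Dd w (fun q => ∑ i, f i q) p = ∑ i, Dd w (f i) p := by
  simp only [Dd]
  rw [fderiv_fun_sum (fun i _ => (hf i p))]
  simp

lemma Dd_clm (A : F →L[ℝ] G) {f : P → F} (hf : Differentiable ℝ f) (w p : P) :
    Dd w (fun q => A (f q)) p = A (Dd w f p) := by
  have h := (A.hasFDerivAt.comp p (hf p).hasFDerivAt).fderiv
  simp only [Dd]
  rw [show (fun q => A (f q)) = (⇑A ∘ f) from rfl, h]
  rfl

lemma Dd_const_smul (c : ℂ) {f : P → F} [Module ℂ F] [IsScalarTower ℝ ℂ F]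
    [ContinuousConstSMul ℂ F] [SMulCommClass ℝ ℂ F] (hf : Differentiable ℝ f) (w p : P) :
    Dd w (fun q => c • f q) p = c • Dd w f p := by
  simp only [Dd, fderiv_fun_const_smul (hf p) c, ContinuousLinearMap.smul_apply]

lemma Dd_smul {c : P → ℂ} {f : P → F} [NormedSpace ℂ F] [IsScalarTower ℝ ℂ F]
    (hc : Differentiable ℝ c) (hf : Differentiable ℝ f) (w p : P) :
    Dd w (fun q => c q • f q) p = Dd w c p • f p + c p • Dd w f p := by
  simp only [Dd, fderiv_fun_smul (hc p) (hf p)]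
  simp [add_comm]

lemma Dd_bilin (b : F →L[ℝ] G →L[ℝ] ℂ) {f : P → F} {g : P → G}
    (hf : Differentiable ℝ f) (hg : Differentiable ℝ g) (w p : P) :
    Dd w (fun q => b (f q) (g q)) p = b (Dd w f p) (g p) + b (f p) (Dd w g p) := by
  have hb := b.isBoundedBilinearMap
  have h := (hb.hasFDerivAt (f p, g p)).comp p (((hf p).hasFDerivAt).prodMk ((hg p).hasFDerivAt))
  simp only [Dd]
  rw [show (fun q => b (f q) (g q)) = ((fun z : F × G => b z.1 z.2) ∘ fun q => (f q, g q)) from rfl,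
    h.fderiv]
  simp [hb.deriv_apply, add_comm]


/-! ### Matrix and bilinear form layer -/

/-- `mulVec` by a fixed complex matrix, as an `ℝ`-continuous-linear map on `C4`. -/
def Mc (A : Matrix (Fin 4) (Fin 4) ℂ) : C4 →L[ℝ] C4 :=
  LinearMap.toContinuousLinearMap ((Matrix.mulVecLin A).restrictScalars ℝ)

lemma Mc_apply (A : Matrix (Fin 4) (Fin 4) ℂ) (φ : C4) : Mc A φ = A.mulVec φ := rfl

lemma dform_add_left (γ : Fin 4 → Matrix (Fin 4) (Fin 4) ℂ) (a b c : C4) :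
    dform γ (a + b) c = dform γ a c + dform γ b c := by
  simp [dform, star_add, add_dotProduct]

lemma dform_smul_left (γ : Fin 4 → Matrix (Fin 4) (Fin 4) ℂ) (r : ℝ) (a c : C4) :
    dform γ (r • a) c = r • dform γ a c := by
  simp [dform, star_smul, smul_dotProduct]

lemma dform_add_right (γ : Fin 4 → Matrix (Fin 4) (Fin 4) ℂ) (a b c : C4) :
    dform γ c (a + b) = dform γ c a + dform γ c b := by
  simp [dform, Matrix.mulVec_add, dotProduct_add]

lemma dform_smul_right (γ : Fin 4 → Matrix (Fin 4) (Fin 4) ℂ) (r : ℝ) (a c : C4) :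
    dform γ c (r • a) = r • dform γ c a := by
  simp [dform, Matrix.mulVec_smul, dotProduct_smul]

/-- The Dirac bilinear form as a continuous `ℝ`-bilinear map. -/
def bC (γ : Fin 4 → Matrix (Fin 4) (Fin 4) ℂ) : C4 →L[ℝ] C4 →L[ℝ] ℂ :=
  LinearMap.toContinuousLinearMap
    { toFun := fun φ => LinearMap.toContinuousLinearMap
        (LinearMap.mk₂ ℝ (fun a c => dform γ a c) (dform_add_left γ) (dform_smul_left γ)
          (fun a b c => dform_add_right γ b c a) (fun r a c => dform_smul_right γ r c a) φ)
      map_add' := fun a b => by ext χ; simp [dform_add_left]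
      map_smul' := fun r a => by ext χ; simp [dform_smul_left] }

lemma bC_apply (γ : Fin 4 → Matrix (Fin 4) (Fin 4) ℂ) (φ χ : C4) :
    bC γ φ χ = dform γ φ χ := rfl

/-! ### Clifford algebra consequences -/

section Gamma
variable {γ : Fin 4 → Matrix (Fin 4) (Fin 4) ℂ}

lemma gamma_anticomm (hcl : CliffordRel γ) {μ ν : Fin 4} (h : μ ≠ ν) :
    γ μ * γ ν = -(γ ν * γ μ) := by
  have h1 := hcl μ ν
  rw [if_neg h] at h1
  simp only [mul_zero, zero_smul] at h1
  linear_combination (norm := abel) h1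

lemma gamma_adj_comm (hcl : CliffordRel γ) (hadj : AdjRel γ) (μ : Fin 4) :
    (γ μ)ᴴ * γ 0 = γ 0 * γ μ := by
  rcases eq_or_ne μ 0 with h | h
  · subst h
    rw [hadj 0]
    simp [ηc]
  · rw [hadj μ]
    have : ηc μ = 1 := by simp [ηc, h]
    rw [this]
    simp only [neg_smul, one_smul, Matrix.neg_mul]
    rw [gamma_anticomm hcl h, neg_neg]

lemma dform_cancel (hcl : CliffordRel γ) (hadj : AdjRel γ) (μ : Fin 4) (r : ℝ) (φ : C4) :
    dform γ (Complex.I • ((r : ℂ) • (γ μ).mulVec φ)) φ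
      + dform γ φ (Complex.I • ((r : ℂ) • (γ μ).mulVec φ)) = 0 := by
  set c : ℂ := Complex.I * (r : ℂ) with hc
  have h1 : Complex.I • ((r : ℂ) • (γ μ).mulVec φ) = c • (γ μ).mulVec φ := by
    rw [smul_smul]
  have hstar : star c = -c := by
    simp [hc, Complex.ext_iff]
  have key : ∀ A : Matrix (Fin 4) (Fin 4) ℂ,
      star (A.mulVec φ) ⬝ᵥ (γ 0).mulVec φ = star φ ⬝ᵥ (Aᴴ * γ 0).mulVec φ := by
    intro A
    rw [Matrix.star_mulVec, ← Matrix.dotProduct_mulVec, Matrix.mulVec_mulVec]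
  have e1 : star (c • (γ μ).mulVec φ) ⬝ᵥ (γ 0).mulVec φ
      = -c * (star φ ⬝ᵥ ((γ μ)ᴴ * γ 0).mulVec φ) := by
    rw [star_smul, hstar, neg_smul, neg_dotProduct, smul_dotProduct, key,
      smul_eq_mul]
    ring
  have e2 : star φ ⬝ᵥ (γ 0).mulVec (c • (γ μ).mulVec φ)
      = c * (star φ ⬝ᵥ (γ 0 * γ μ).mulVec φ) := by
    rw [Matrix.mulVec_smul, dotProduct_smul, Matrix.mulVec_mulVec, smul_eq_mul]
  simp only [dform, h1]
  rw [e1, e2, gamma_adj_comm hcl hadj]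
  ring

lemma dform_real_cancel (γ : Fin 4 → Matrix (Fin 4) (Fin 4) ℂ) (r : ℝ) (φ : C4) :
    dform γ (((r : ℂ)) • φ) φ + dform γ φ (((r : ℂ)) • φ)
      = 2 * (r : ℂ) * dform γ φ φ := by
  simp only [dform, star_smul, smul_dotProduct, Matrix.mulVec_smul,
    dotProduct_smul, smul_eq_mul, Complex.star_def, Complex.conj_ofReal]
  ring

/-- Symmetrization of the Clifford double sum. -/
lemma double_sum (hcl : CliffordRel γ) (X : Fin 4 → Fin 4 → C4) (hX : ∀ μ ν, X μ ν = X ν μ) :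
    ∑ ν : Fin 4, ∑ μ : Fin 4, Mc (γ ν * γ μ) (X ν μ)
      = ∑ μ : Fin 4, (-ηc μ) • X μ μ := by
  have key : (2 : ℂ) • (∑ ν : Fin 4, ∑ μ : Fin 4, Mc (γ ν * γ μ) (X ν μ))
      = (2 : ℂ) • (∑ μ : Fin 4, (-ηc μ) • X μ μ) := by
    have hswap : ∑ ν : Fin 4, ∑ μ : Fin 4, Mc (γ ν * γ μ) (X ν μ)
        = ∑ ν : Fin 4, ∑ μ : Fin 4, Mc (γ μ * γ ν) (X ν μ) := by
      rw [Finset.sum_comm]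
      refine Finset.sum_congr rfl fun ν _ => Finset.sum_congr rfl fun μ _ => ?_
      rw [hX ν μ]
    rw [two_smul]
    nth_rewrite 2 [hswap]
    rw [← Finset.sum_add_distrib]
    calc (∑ ν : Fin 4, ((∑ μ : Fin 4, Mc (γ ν * γ μ) (X ν μ)) + ∑ μ : Fin 4, Mc (γ μ * γ ν) (X ν μ)))
        = ∑ ν : Fin 4, ∑ μ : Fin 4, Mc (γ ν * γ μ + γ μ * γ ν) (X ν μ) := by
          refine Finset.sum_congr rfl fun ν _ => ?_
          rw [← Finset.sum_add_distrib]
          refine Finset.sum_congr rfl fun μ _ => ?_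
          simp [Mc_apply, Matrix.add_mulVec]
      _ = ∑ ν : Fin 4, ∑ μ : Fin 4, (if ν = μ then ((-2 : ℂ) * ηc ν) • X ν μ else 0) := by
          refine Finset.sum_congr rfl fun ν _ => Finset.sum_congr rfl fun μ _ => ?_
          rw [hcl ν μ]
          by_cases h : ν = μ
          · subst h
            simp only [if_pos rfl, Mc_apply, Matrix.smul_mulVec, Matrix.one_mulVec]
            simp
          · simp [h, Mc_apply, Matrix.smul_mulVec, Matrix.one_mulVec]
      _ = ∑ ν : Fin 4, ((-2 : ℂ) * ηc ν) • X ν ν := by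
          refine Finset.sum_congr rfl fun ν _ => ?_
          simp
      _ = (2 : ℂ) • ∑ μ : Fin 4, (-ηc μ) • X μ μ := by
          rw [Finset.smul_sum]
          refine Finset.sum_congr rfl fun ν _ => ?_
          rw [smul_smul]
          congr 1
          ring
  exact smul_right_injective _ two_ne_zero key

end Gamma
/-! ### The Dirac equation manipulation -/

section Main
variable {γ : Fin 4 → Matrix (Fin 4) (Fin 4) ℂ} {ψ : ℝ → Sp → C4} {v : ℝ → Sp → ℝ}

/-- The four coordinate directions in spacetime. -/
def dir : Fin 4 → P := Fin.cases w0 ws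

/-- The complexified potential as a function on spacetime. -/
def vCf (v : ℝ → Sp → ℝ) : P → ℂ := fun q => ((v q.1 q.2 : ℝ) : ℂ)

lemma vCf_contDiff (hv : Smth v) : ContDiff ℝ (⊤ : ℕ∞) (vCf v) :=
  Complex.ofRealCLM.contDiff.comp hv

lemma dirac_D (hψ : Smth ψ)
    (hdirac : ∀ t x, diracOp γ ψ t x = ((v t x : ℝ) : ℂ) • ψ t x) (q : P) :
    (-Complex.I) • (∑ μ : Fin 4, Mc (γ μ) (Dd (dir μ) (tf ψ) q)) = vCf v q • tf ψ q := by
  obtain ⟨t, x⟩ := q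
  have h := hdirac t x
  simp only [diracOp] at h
  rw [Fin.sum_univ_succ]
  simp only [dir, Fin.cases_zero, Fin.cases_succ, Mc_apply]
  rw [← ptE_eq hψ t x]
  have : ∀ a : Fin 3, Dd (ws a) (tf ψ) (t, x) = pxE a ψ t x := fun a => (pxE_eq hψ a t x).symm
  simp only [this]
  exact h

lemma dirac_D' (hψ : Smth ψ) (hv : Smth v)
    (hdirac : ∀ t x, diracOp γ ψ t x = ((v t x : ℝ) : ℂ) • ψ t x) (z : P) (q : P) :
    (-Complex.I) • (∑ μ : Fin 4, Mc (γ μ) (Dd z (Dd (dir μ) (tf ψ)) q))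
      = Dd z (vCf v) q • tf ψ q + vCf v q • Dd z (tf ψ) q := by
  have hΨ : ContDiff ℝ (⊤ : ℕ∞) (tf ψ) := hψ
  have dΨ := hΨ.differentiable (by simp)
  have dDΨ : ∀ w, Differentiable ℝ (Dd w (tf ψ)) :=
    fun w => (Dd_contDiff hΨ w).differentiable (by simp)
  have dterm : ∀ μ : Fin 4, Differentiable ℝ (fun q => Mc (γ μ) (Dd (dir μ) (tf ψ) q)) :=
    fun μ => (Mc (γ μ)).differentiable.comp (dDΨ (dir μ))
  have dsum : Differentiable ℝ (fun q => ∑ μ : Fin 4, Mc (γ μ) (Dd (dir μ) (tf ψ) q)) := by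
    intro p
    exact DifferentiableAt.fun_sum (fun μ _ => (dterm μ).differentiableAt)
  have hfun : (fun q => (-Complex.I) • (∑ μ : Fin 4, Mc (γ μ) (Dd (dir μ) (tf ψ) q)))
      = fun q => vCf v q • tf ψ q := funext (dirac_D hψ hdirac)
  have hL : Dd z (fun q => (-Complex.I) • (∑ μ : Fin 4, Mc (γ μ) (Dd (dir μ) (tf ψ) q))) q
      = (-Complex.I) • (∑ μ : Fin 4, Mc (γ μ) (Dd z (Dd (dir μ) (tf ψ)) q)) := by
    rw [Dd_const_smul (-Complex.I) dsum z q]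
    congr 1
    rw [Dd_sum dterm z q]
    exact Finset.sum_congr rfl fun μ _ => Dd_clm (Mc (γ μ)) (dDΨ (dir μ)) z q
  have hR : Dd z (fun q => vCf v q • tf ψ q) q
      = Dd z (vCf v) q • tf ψ q + vCf v q • Dd z (tf ψ) q :=
    Dd_smul ((vCf_contDiff hv).differentiable (by simp)) dΨ z q
  rw [← hL, hfun, hR]

/-- The wave operator applied to `ψ`, from the squared Dirac equation. -/
lemma main_negPsi (hcl : CliffordRel γ) (hψ : Smth ψ) (hv : Smth v)
    (hdirac : ∀ t x, diracOp γ ψ t x = ((v t x : ℝ) : ℂ) • ψ t x) (q : P) :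
    (∑ μ : Fin 4, (-ηc μ) • Dd (dir μ) (Dd (dir μ) (tf ψ)) q)
      = Complex.I • (∑ μ : Fin 4, Dd (dir μ) (vCf v) q • Mc (γ μ) (tf ψ q))
        - (vCf v q * vCf v q) • tf ψ q := by
  have hΨ : ContDiff ℝ (⊤ : ℕ∞) (tf ψ) := hψ
  set X : Fin 4 → Fin 4 → C4 := fun ν μ => Dd (dir ν) (Dd (dir μ) (tf ψ)) q with hXdef
  have hX : ∀ μ ν, X μ ν = X ν μ := fun μ ν => Dd_symm hΨ (dir μ) (dir ν) q
  have hII : (-Complex.I) * (-Complex.I) = (-1 : ℂ) := by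
    have h := Complex.I_mul_I
    calc (-Complex.I) * (-Complex.I) = Complex.I * Complex.I := by ring
      _ = -1 := h
  have hsum : ∑ ν : Fin 4, (-Complex.I) • Mc (γ ν)
        ((-Complex.I) • (∑ μ : Fin 4, Mc (γ μ) (X ν μ)))
      = ∑ ν : Fin 4, (-Complex.I) • Mc (γ ν)
          (Dd (dir ν) (vCf v) q • tf ψ q + vCf v q • Dd (dir ν) (tf ψ) q) :=
    Finset.sum_congr rfl fun ν _ => by rw [dirac_D' hψ hv hdirac (dir ν) q]
  have hLHS : ∑ ν : Fin 4, (-Complex.I) • Mc (γ ν)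
        ((-Complex.I) • (∑ μ : Fin 4, Mc (γ μ) (X ν μ)))
      = -(∑ μ : Fin 4, (-ηc μ) • X μ μ) := by
    have step : ∀ ν : Fin 4, (-Complex.I) • Mc (γ ν)
          ((-Complex.I) • (∑ μ : Fin 4, Mc (γ μ) (X ν μ)))
        = -(∑ μ : Fin 4, Mc (γ ν * γ μ) (X ν μ)) := by
      intro ν
      have hsm : Mc (γ ν) ((-Complex.I) • (∑ μ : Fin 4, Mc (γ μ) (X ν μ)))
          = (-Complex.I) • Mc (γ ν) (∑ μ : Fin 4, Mc (γ μ) (X ν μ)) := by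
        simp only [Mc_apply, Matrix.mulVec_smul]
      rw [hsm]
      rw [smul_smul, hII, neg_one_smul]
      congr 1
      rw [map_sum]
      exact Finset.sum_congr rfl fun μ _ => by simp [Mc_apply, Matrix.mulVec_mulVec]
    rw [Finset.sum_congr rfl (fun ν _ => step ν), Finset.sum_neg_distrib,
      double_sum hcl X hX]
  have hRHS : ∑ ν : Fin 4, (-Complex.I) • Mc (γ ν)
        (Dd (dir ν) (vCf v) q • tf ψ q + vCf v q • Dd (dir ν) (tf ψ) q)
      = -(Complex.I • (∑ μ : Fin 4, Dd (dir μ) (vCf v) q • Mc (γ μ) (tf ψ q)))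
        + (vCf v q * vCf v q) • tf ψ q := by
    have step : ∀ ν : Fin 4, (-Complex.I) • Mc (γ ν)
          (Dd (dir ν) (vCf v) q • tf ψ q + vCf v q • Dd (dir ν) (tf ψ) q)
        = -(Complex.I • (Dd (dir ν) (vCf v) q • Mc (γ ν) (tf ψ q)))
          + vCf v q • ((-Complex.I) • Mc (γ ν) (Dd (dir ν) (tf ψ) q)) := by
      intro ν
      have hM : Mc (γ ν) (Dd (dir ν) (vCf v) q • tf ψ q + vCf v q • Dd (dir ν) (tf ψ) q)
          = Dd (dir ν) (vCf v) q • Mc (γ ν) (tf ψ q)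
            + vCf v q • Mc (γ ν) (Dd (dir ν) (tf ψ) q) := by
        simp [Mc_apply, Matrix.mulVec_add, Matrix.mulVec_smul]
      rw [hM, smul_add]
      congr 1
      · rw [smul_smul, smul_smul, neg_mul, ← neg_smul]
      · rw [smul_smul, smul_smul, mul_comm]
    rw [Finset.sum_congr rfl (fun ν _ => step ν), Finset.sum_add_distrib,
      Finset.sum_neg_distrib, ← Finset.smul_sum (r := Complex.I), ← Finset.smul_sum (r := vCf v q)]
    have hlast : ∑ ν : Fin 4, (-Complex.I) • Mc (γ ν) (Dd (dir ν) (tf ψ) q)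
        = vCf v q • tf ψ q := by
      rw [← Finset.smul_sum]
      exact dirac_D hψ hdirac q
    rw [hlast, smul_smul]
  have := hLHS.symm.trans (hsum.trans hRHS)
  have h2 : ∑ μ : Fin 4, (-ηc μ) • X μ μ
      = Complex.I • (∑ μ : Fin 4, Dd (dir μ) (vCf v) q • Mc (γ μ) (tf ψ q))
        - (vCf v q * vCf v q) • tf ψ q := by
    have h3 := congrArg Neg.neg this
    rw [neg_neg] at h3
    rw [h3]
    abel
  exact h2

end Main

lemma eta_sum (Y : Fin 4 → C4) :
    ∑ μ : Fin 4, (-ηc μ) • Y μ = Y 0 - ∑ a : Fin 3, Y a.succ := by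
  rw [Fin.sum_univ_succ]
  have h0 : (-ηc 0 : ℂ) = 1 := by simp [ηc]
  have hs : ∀ a : Fin 3, (-ηc a.succ : ℂ) = -1 := fun a => by
    simp [ηc, Fin.succ_ne_zero]
  rw [h0, one_smul]
  rw [Finset.sum_congr rfl fun a _ => by rw [hs a, neg_one_smul]]
  rw [Finset.sum_neg_distrib, sub_eq_add_neg]

lemma negBox_sub {f g : ℝ → Sp → F} (hf : Smth f) (hg : Smth g) (t : ℝ) (x : Sp) :
    negBox (fun s y => f s y - g s y) t x = negBox f t x - negBox g t x := by
  have hfg : Smth (fun s y => f s y - g s y) := hf.sub hg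
  have dtf := hf.differentiable (by simp)
  have dtg := hg.differentiable (by simp)
  have h1 : ∀ z : P, Dd z (tf (fun s y => f s y - g s y))
      = fun q => Dd z (tf f) q - Dd z (tf g) q :=
    fun z => funext fun q => Dd_sub dtf dtg z q
  have h2 : ∀ z w q, Dd w (Dd z (tf (fun s y => f s y - g s y))) q
      = Dd w (Dd z (tf f)) q - Dd w (Dd z (tf g)) q := by
    intro z w q
    rw [h1 z]
    exact Dd_sub ((Dd_contDiff hf z).differentiable (by simp))
      ((Dd_contDiff hg z).differentiable (by simp)) w q
  rw [negBox_eq hfg, negBox_eq hf, negBox_eq hg]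
  simp only [h2]
  rw [Finset.sum_sub_distrib]
  abel

lemma negBox_clm (A : F →L[ℝ] G) {f : ℝ → Sp → F} (hf : Smth f) (t : ℝ) (x : Sp) :
    negBox (fun s y => A (f s y)) t x = A (negBox f t x) := by
  have hAf : Smth (fun s y => A (f s y)) := A.contDiff.comp hf
  have dtf := hf.differentiable (by simp)
  have h1 : ∀ z : P, Dd z (tf (fun s y => A (f s y)))
      = fun q => A (Dd z (tf f) q) :=
    fun z => funext fun q => Dd_clm A dtf z q
  have h2 : ∀ z w q, Dd w (Dd z (tf (fun s y => A (f s y)))) q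
      = A (Dd w (Dd z (tf f)) q) := by
    intro z w q
    rw [h1 z]
    exact Dd_clm A ((Dd_contDiff hf z).differentiable (by simp)) w q
  rw [negBox_eq hAf, negBox_eq hf]
  simp only [h2]
  rw [map_sub, map_sum]

section BPart
variable {γ : Fin 4 → Matrix (Fin 4) (Fin 4) ℂ} {ψ : ℝ → Sp → C4}

lemma Smth_B (hψ : Smth ψ) : Smth (fun s y => dform γ (ψ s y) (ψ s y)) :=
  ((bC γ).isBoundedBilinearMap.contDiff).comp
    ((hψ : ContDiff ℝ (⊤ : ℕ∞) (tf ψ)).prodMk (hψ : ContDiff ℝ (⊤ : ℕ∞) (tf ψ)))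

lemma negBox_B (hψ : Smth ψ) (t : ℝ) (x : Sp) :
    negBox (fun s y => dform γ (ψ s y) (ψ s y)) t x
      = bC γ (Dd w0 (Dd w0 (tf ψ)) (t, x) - ∑ a : Fin 3, Dd (ws a) (Dd (ws a) (tf ψ)) (t, x))
            (tf ψ (t, x))
        + bC γ (tf ψ (t, x))
            (Dd w0 (Dd w0 (tf ψ)) (t, x) - ∑ a : Fin 3, Dd (ws a) (Dd (ws a) (tf ψ)) (t, x))
        + 2 * (bC γ (Dd w0 (tf ψ) (t, x)) (Dd w0 (tf ψ) (t, x))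
            - ∑ a : Fin 3, bC γ (Dd (ws a) (tf ψ) (t, x)) (Dd (ws a) (tf ψ) (t, x))) := by
  have hΨ : ContDiff ℝ (⊤ : ℕ∞) (tf ψ) := hψ
  have dΨ := hΨ.differentiable (by simp)
  set BP : P → ℂ := fun q => bC γ (tf ψ q) (tf ψ q) with hBPdef
  have key : negBox (fun s y => dform γ (ψ s y) (ψ s y)) t x
      = Dd w0 (Dd w0 BP) (t, x) - ∑ i : Fin 3, Dd (ws i) (Dd (ws i) BP) (t, x) :=
    negBox_eq (Smth_B hψ) t x
  have hDD : ∀ z : P, Dd z (Dd z BP) (t, x)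
      = bC γ (Dd z (Dd z (tf ψ)) (t, x)) (tf ψ (t, x))
        + bC γ (tf ψ (t, x)) (Dd z (Dd z (tf ψ)) (t, x))
        + 2 * bC γ (Dd z (tf ψ) (t, x)) (Dd z (tf ψ) (t, x)) := by
    intro z
    have dDz : Differentiable ℝ (Dd z (tf ψ)) := (Dd_contDiff hΨ z).differentiable (by simp)
    have h1 : Dd z BP = fun q => (fun q => bC γ (Dd z (tf ψ) q) (tf ψ q)) q
        + (fun q => bC γ (tf ψ q) (Dd z (tf ψ) q)) q :=
      funext fun q => Dd_bilin (bC γ) dΨ dΨ z q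
    have d1 : Differentiable ℝ (fun q => bC γ (Dd z (tf ψ) q) (tf ψ q)) :=
      fun q => (((bC γ).isBoundedBilinearMap.contDiff.comp
        ((Dd_contDiff hΨ z).prodMk hΨ)).differentiable (by simp) q)
    have d2 : Differentiable ℝ (fun q => bC γ (tf ψ q) (Dd z (tf ψ) q)) :=
      fun q => (((bC γ).isBoundedBilinearMap.contDiff.comp
        (hΨ.prodMk (Dd_contDiff hΨ z))).differentiable (by simp) q)
    rw [h1, Dd_add d1 d2 z (t, x), Dd_bilin (bC γ) dDz dΨ z (t, x),
      Dd_bilin (bC γ) dΨ dDz z (t, x)]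
    ring
  rw [key, hDD w0, Finset.sum_congr rfl fun i _ => hDD (ws i)]
  simp only [map_sub, map_sum, ContinuousLinearMap.sub_apply,
    ContinuousLinearMap.coe_sum', Finset.sum_apply, Finset.sum_add_distrib]
  ring_nf
  rw [Finset.sum_mul]

end BPart
-- INSERT


end Stmt17

open Stmt17 in
/-- nonlinear transformation for the Klein-Gordon component:
`Ṽ¹ = V¹ - ψ*γ⁰ψ` satisfies `-□Ṽ¹ + Ṽ¹ = 2v²ψ*γ⁰ψ - 2Q₀(ψ*, γ⁰ψ)`. -/
theorem stmt_17 (γ : Fin 4 → Matrix (Fin 4) (Fin 4) ℂ)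
    (hcl : CliffordRel γ) (hadj : AdjRel γ)
    (ψ : ℝ → Sp → C4) (v : ℝ → Sp → ℝ) (V1 : ℝ → Sp → ℝ)
    (hψ : Smth ψ) (hv : Smth v) (hV1 : Smth V1)
    (hdirac : ∀ t x, diracOp γ ψ t x = ((v t x : ℝ) : ℂ) • ψ t x)
    (hkg : ∀ t x, ((negBox V1 t x + V1 t x : ℝ) : ℂ) = dform γ (ψ t x) (ψ t x)) :
    ∀ t x,
      negBox (fun s y => ((V1 s y : ℝ) : ℂ) - dform γ (ψ s y) (ψ s y)) t x +
          (((V1 t x : ℝ) : ℂ) - dform γ (ψ t x) (ψ t x)) =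
        2 * ((v t x : ℝ) : ℂ) ^ 2 * dform γ (ψ t x) (ψ t x) -
          2 * (dform γ (ptE ψ t x) (ptE ψ t x) -
            ∑ a : Fin 3, dform γ (pxE a ψ t x) (pxE a ψ t x)) := by
  intro t x
  have hΨ : ContDiff ℝ (⊤ : ℕ∞) (tf ψ) := hψ
  have hV1C : Smth (fun s y => ((V1 s y : ℝ) : ℂ)) := Complex.ofRealCLM.contDiff.comp hV1
  have hB : Smth (fun s y => dform γ (ψ s y) (ψ s y)) := Smth_B hψ
  -- Step 1: split the box of the difference
  have hsplit : negBox (fun s y => ((V1 s y : ℝ) : ℂ) - dform γ (ψ s y) (ψ s y)) t x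
      = negBox (fun s y => ((V1 s y : ℝ) : ℂ)) t x
        - negBox (fun s y => dform γ (ψ s y) (ψ s y)) t x :=
    negBox_sub hV1C hB t x
  have hcast : negBox (fun s y => ((V1 s y : ℝ) : ℂ)) t x = ((negBox V1 t x : ℝ) : ℂ) :=
    negBox_clm Complex.ofRealCLM hV1 t x
  have hkg' : ((negBox V1 t x : ℝ) : ℂ) = dform γ (ψ t x) (ψ t x) - ((V1 t x : ℝ) : ℂ) := by
    have h := hkg t x
    push_cast at h
    linear_combination h
  -- Step 2: compute negBox of the bilinear form
  have hNB := negBox_B (γ := γ) hψ t x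
  -- identify the second-order term via the squared Dirac equation
  have hN : Dd w0 (Dd w0 (tf ψ)) (t, x)
        - ∑ a : Fin 3, Dd (ws a) (Dd (ws a) (tf ψ)) (t, x)
      = Complex.I • (∑ μ : Fin 4, Dd (dir μ) (vCf v) (t, x) • Mc (γ μ) (tf ψ (t, x)))
        - (vCf v (t, x) * vCf v (t, x)) • tf ψ (t, x) := by
    have h1 := main_negPsi hcl hψ hv hdirac (t, x)
    have h2 := eta_sum (fun μ => Dd (dir μ) (Dd (dir μ) (tf ψ)) (t, x))
    have e0 : dir 0 = w0 := rfl
    have es : ∀ a : Fin 3, dir a.succ = ws a := fun a => rfl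
    simp only [e0, es] at h2
    rw [← h2, h1]
  -- the coefficients are real
  have hreal : ∀ z : P, Dd z (vCf v) (t, x)
      = ((Dd z (tf v) (t, x) : ℝ) : ℂ) :=
    fun z => Dd_clm Complex.ofRealCLM (hv.differentiable (by simp)) z (t, x)
  -- Step 3: the first-order terms cancel and the zeroth-order terms double
  have hcancel : bC γ (Dd w0 (Dd w0 (tf ψ)) (t, x)
          - ∑ a : Fin 3, Dd (ws a) (Dd (ws a) (tf ψ)) (t, x)) (tf ψ (t, x))
        + bC γ (tf ψ (t, x)) (Dd w0 (Dd w0 (tf ψ)) (t, x)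
          - ∑ a : Fin 3, Dd (ws a) (Dd (ws a) (tf ψ)) (t, x))
      = -(2 * ((v t x : ℝ) : ℂ) ^ 2 * dform γ (ψ t x) (ψ t x)) := by
    rw [hN]
    have hIsum : Complex.I • (∑ μ : Fin 4, Dd (dir μ) (vCf v) (t, x) • Mc (γ μ) (tf ψ (t, x)))
        = ∑ μ : Fin 4, Complex.I • ((((Dd (dir μ) (tf v) (t, x) : ℝ)) : ℂ)
            • (γ μ).mulVec (tf ψ (t, x))) := by
      rw [Finset.smul_sum]
      exact Finset.sum_congr rfl fun μ _ => by rw [hreal (dir μ), Mc_apply]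
    have hv2 : (vCf v (t, x) * vCf v (t, x)) • tf ψ (t, x)
        = (((v t x * v t x : ℝ)) : ℂ) • tf ψ (t, x) := by
      simp [vCf]
    rw [hIsum, hv2]
    simp only [map_sub, map_sum, ContinuousLinearMap.sub_apply,
      ContinuousLinearMap.coe_sum', Finset.sum_apply]
    have hterm : ∀ μ : Fin 4,
        bC γ (Complex.I • ((((Dd (dir μ) (tf v) (t, x) : ℝ)) : ℂ)
            • (γ μ).mulVec (tf ψ (t, x)))) (tf ψ (t, x))
          + bC γ (tf ψ (t, x)) (Complex.I • ((((Dd (dir μ) (tf v) (t, x) : ℝ)) : ℂ)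
            • (γ μ).mulVec (tf ψ (t, x)))) = 0 := by
      intro μ
      rw [bC_apply, bC_apply]
      exact dform_cancel hcl hadj μ _ _
    have hterm2 : bC γ ((((v t x * v t x : ℝ)) : ℂ) • tf ψ (t, x)) (tf ψ (t, x))
          + bC γ (tf ψ (t, x)) ((((v t x * v t x : ℝ)) : ℂ) • tf ψ (t, x))
        = 2 * (((v t x * v t x : ℝ)) : ℂ) * dform γ (tf ψ (t, x)) (tf ψ (t, x)) := by
      rw [bC_apply, bC_apply]
      exact dform_real_cancel γ _ _
    have hexp : dform γ (tf ψ (t, x)) (tf ψ (t, x)) = dform γ (ψ t x) (ψ t x) := rfl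
    -- combine
    calc (∑ μ : Fin 4, bC γ (Complex.I • ((((Dd (dir μ) (tf v) (t, x) : ℝ)) : ℂ)
            • (γ μ).mulVec (tf ψ (t, x)))) (tf ψ (t, x))
          - bC γ ((((v t x * v t x : ℝ)) : ℂ) • tf ψ (t, x)) (tf ψ (t, x)))
        + (∑ μ : Fin 4, bC γ (tf ψ (t, x)) (Complex.I • ((((Dd (dir μ) (tf v) (t, x) : ℝ)) : ℂ)
            • (γ μ).mulVec (tf ψ (t, x))))
          - bC γ (tf ψ (t, x)) ((((v t x * v t x : ℝ)) : ℂ) • tf ψ (t, x)))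
        = (∑ μ : Fin 4, (bC γ (Complex.I • ((((Dd (dir μ) (tf v) (t, x) : ℝ)) : ℂ)
            • (γ μ).mulVec (tf ψ (t, x)))) (tf ψ (t, x))
          + bC γ (tf ψ (t, x)) (Complex.I • ((((Dd (dir μ) (tf v) (t, x) : ℝ)) : ℂ)
            • (γ μ).mulVec (tf ψ (t, x))))))
          - (bC γ ((((v t x * v t x : ℝ)) : ℂ) • tf ψ (t, x)) (tf ψ (t, x))
            + bC γ (tf ψ (t, x)) ((((v t x * v t x : ℝ)) : ℂ) • tf ψ (t, x))) := by
          rw [Finset.sum_add_distrib]; ring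
      _ = -(2 * ((v t x : ℝ) : ℂ) ^ 2 * dform γ (ψ t x) (ψ t x)) := by
          rw [Finset.sum_congr rfl fun μ _ => hterm μ, hterm2, hexp]
          push_cast
          ring
  -- Step 4: identify the Q₀ part
  have hQ : bC γ (Dd w0 (tf ψ) (t, x)) (Dd w0 (tf ψ) (t, x))
        - ∑ a : Fin 3, bC γ (Dd (ws a) (tf ψ) (t, x)) (Dd (ws a) (tf ψ) (t, x))
      = dform γ (ptE ψ t x) (ptE ψ t x)
        - ∑ a : Fin 3, dform γ (pxE a ψ t x) (pxE a ψ t x) := by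
    rw [← ptE_eq hψ t x]
    congr 1
    exact Finset.sum_congr rfl fun a _ => by rw [← pxE_eq hψ a t x]; rfl
  -- Conclusion
  rw [hsplit, hcast, hkg', hNB, hcancel, hQ]
  ring
end
end

section
/- Ghost weight energy identity for Klein–Gordon: if u is a smooth, spatially decaying solution of −□u + u = G on ℝ^{1+3} and q(r,t) = ∫_{−∞}^{r−t} ⟨s⟩^{−1−2δ} ds with δ > 0, then (1/2)∂_t(e^q(|∂u|² + u²)) − ∂^a(e^q ∂_t u ∂_a u) + (e^q/(2⟨r−t⟩^{1+2δ}))(Σ_{a=1}^3 |G_a u|² + u²) = e^q ∂_t u · G pointwise, where G_a = ∂_a + (x_a/r)∂_t. -/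
noncomputable section

open MeasureTheory Matrix

lemma jb_pos (p : ℝ) : 0 < jb p := Real.sqrt_pos.2 (by positivity)

lemma jb_cont : Continuous jb := (continuous_const.add (continuous_pow 2)).sqrt

lemma gd_cont (δ : ℝ) : Continuous (fun s => jb s ^ (-(1 + 2 * δ))) :=
  jb_cont.rpow_const (fun s => Or.inl (jb_pos s).ne')

lemma gd_integrable {δ : ℝ} (hδ : 0 < δ) :
    MeasureTheory.Integrable (fun s : ℝ => jb s ^ (-(1 + 2 * δ))) := by
  have h : ∀ s : ℝ, jb s ^ (-(1 + 2 * δ)) = ((1:ℝ) + ‖s‖ ^ 2) ^ (-(1 + 2 * δ) / 2) := by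
    intro s
    have h1 : (0:ℝ) ≤ 1 + s ^ 2 := by positivity
    rw [jb, Real.sqrt_eq_rpow, ← Real.rpow_mul h1, Real.norm_eq_abs, sq_abs]
    ring_nf
  simp only [h]
  exact integrable_rpow_neg_one_add_norm_sq (by simp; linarith)

def Qf (δ : ℝ) (b : ℝ) : ℝ := ∫ s in Set.Iic b, jb s ^ (-(1 + 2 * δ))

lemma hasDerivAt_Qf {δ : ℝ} (hδ : 0 < δ) (b : ℝ) :
    HasDerivAt (Qf δ) (jb b ^ (-(1 + 2 * δ))) b := by
  have hint := gd_integrable hδ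
  have key : ∀ c : ℝ, Qf δ c = Qf δ 0 + ∫ s in (0:ℝ)..c, jb s ^ (-(1 + 2 * δ)) := by
    intro c
    have := intervalIntegral.integral_Iic_sub_Iic (μ := MeasureTheory.volume)
      (f := fun s => jb s ^ (-(1 + 2 * δ))) hint.integrableOn hint.integrableOn (a := 0) (b := c)
    unfold Qf; linarith
  have h2 : HasDerivAt (fun c => Qf δ 0 + ∫ s in (0:ℝ)..c, jb s ^ (-(1 + 2 * δ)))
      (jb b ^ (-(1 + 2 * δ))) b := by
    refine HasDerivAt.const_add _ ?_
    exact intervalIntegral.integral_hasDerivAt_right hint.intervalIntegrable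
      hint.aestronglyMeasurable.stronglyMeasurableAtFilter (gd_cont δ).continuousAt
  exact (funext key) ▸ h2


def ee (i : Fin 3) : ℝ × Sp := ((0:ℝ), EuclideanSpace.single i 1)


/-- pointwise ghost weight energy identity for the Klein–Gordon equation. -/
theorem stmt_18 (δ : ℝ) (hδ : 0 < δ) (u G : ℝ → Sp → ℝ)
    (hu : Smth u) (hG : Smth G)
    (heq : ∀ t x, negBox u t x + u t x = G t x) :
    ∀ t (x : Sp), x ≠ 0 →
      (1 / 2) * ptE (fun s y => Real.exp (qw δ s ‖y‖) *
            ((ptE u s y) ^ 2 + (∑ i : Fin 3, (pxE i u s y) ^ 2) + (u s y) ^ 2)) t x -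
          (∑ a : Fin 3,
            pxE a (fun s y => Real.exp (qw δ s ‖y‖) * (ptE u s y * pxE a u s y)) t x) +
          (Real.exp (qw δ t ‖x‖) / (2 * (jb (‖x‖ - t)) ^ ((1 : ℝ) + 2 * δ))) *
            ((∑ a : Fin 3, (pxE a u t x + (x a / ‖x‖) * ptE u t x) ^ 2) + (u t x) ^ 2) =
        Real.exp (qw δ t ‖x‖) * ptE u t x * G t x := by
  intro t x hx
  simp only [Fin.sum_univ_three]
  have hxn : ‖x‖ ≠ 0 := norm_ne_zero_iff.2 hx
  have hU : ContDiff ℝ (⊤ : ℕ∞) (fun p : ℝ × Sp => u p.1 p.2) := hu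
  have hUd : Differentiable ℝ (fun p : ℝ × Sp => u p.1 p.2) := hU.differentiable (by simp)
  set V : (ℝ × Sp) → (ℝ × Sp) →L[ℝ] ℝ := fderiv ℝ (fun p : ℝ × Sp => u p.1 p.2) with hVdef
  have hVc : ContDiff ℝ (⊤ : ℕ∞) V := hU.fderiv_right (by simp)
  have hVd : Differentiable ℝ V := hVc.differentiable (by simp)
  -- curves
  have hline : ∀ (s : ℝ) (y : Sp), HasDerivAt (fun s' : ℝ => ((s' : ℝ), y)) ((1:ℝ), (0:Sp)) s :=
    fun s y => (hasDerivAt_id s).prodMk (hasDerivAt_const s y)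
  have hslice : ∀ (s : ℝ) (y : Sp), HasFDerivAt (fun y' : Sp => ((s : ℝ), y'))
      (ContinuousLinearMap.inr ℝ ℝ Sp) y := fun s y => hasFDerivAt_prodMk_right s y
  -- first derivatives as V
  have hptD : ∀ (s : ℝ) (y : Sp), HasDerivAt (fun s' => u s' y) (V (s, y) (1, 0)) s := by
    intro s y
    exact (hUd (s, y)).hasFDerivAt.comp_hasDerivAt s (hline s y)
  have hpt : ∀ s y, ptE u s y = V (s, y) (1, 0) := fun s y => (hptD s y).deriv
  have hpxD : ∀ (s : ℝ) (y : Sp), HasFDerivAt (fun y' => u s y')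
      ((V (s, y)).comp (ContinuousLinearMap.inr ℝ ℝ Sp)) y :=
    fun s y => (hUd (s, y)).hasFDerivAt.comp y (hslice s y)
  have hpx : ∀ (i : Fin 3) (s : ℝ) (y : Sp), pxE i u s y = V (s, y) (ee i) := by
    intro i s y
    show fderiv ℝ (fun y' => u s y') y (EuclideanSpace.single i 1) = _
    rw [(hpxD s y).fderiv]
    simp [ee]
  -- second derivative
  set H : (ℝ × Sp) →L[ℝ] (ℝ × Sp) →L[ℝ] ℝ := fderiv ℝ V (t, x) with hHdef
  have hsymm : ∀ v w, H v w = H w v := fun v w =>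
    second_derivative_symmetric (fun y => (hUd y).hasFDerivAt) ((hVd (t, x)).hasFDerivAt) v w
  have hVt : ∀ w, HasDerivAt (fun s => V (s, x) w) (H (1, 0) w) t := by
    intro w
    have h1 : HasDerivAt (fun s => V (s, x)) (H ((1:ℝ), (0:Sp))) t :=
      (hVd (t, x)).hasFDerivAt.comp_hasDerivAt t (hline t x)
    simpa using h1.clm_apply (hasDerivAt_const t w)
  have hVx : ∀ w, HasFDerivAt (fun y => V (t, y) w)
      ((H.comp (ContinuousLinearMap.inr ℝ ℝ Sp)).flip w) x := by
    intro w
    have h1 : HasFDerivAt (fun y => V (t, y)) (H.comp (ContinuousLinearMap.inr ℝ ℝ Sp)) x :=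
      (hVd (t, x)).hasFDerivAt.comp x (hslice t x)
    simpa using h1.clm_apply (hasFDerivAt_const w x)
  have hflipval : ∀ (w : ℝ × Sp) (a : Fin 3),
      ((H.comp (ContinuousLinearMap.inr ℝ ℝ Sp)).flip w) (EuclideanSpace.single a 1)
        = H (ee a) w := by
    intro w a
    simp [ee]
  -- time derivatives of pieces
  have hq_t : HasDerivAt (fun s => qw δ s ‖x‖) (-(jb (‖x‖ - t) ^ (-(1 + 2 * δ)))) t := by
    have h := (hasDerivAt_Qf hδ (‖x‖ - t)).comp t ((hasDerivAt_const t ‖x‖).sub (hasDerivAt_id t))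
    have h2 : HasDerivAt (fun s => qw δ s ‖x‖) (jb (‖x‖ - t) ^ (-(1 + 2 * δ)) * (0 - 1)) t := h
    simpa using h2
  have hexp_t : HasDerivAt (fun s => Real.exp (qw δ s ‖x‖))
      (Real.exp (qw δ t ‖x‖) * -(jb (‖x‖ - t) ^ (-(1 + 2 * δ)))) t := hq_t.exp
  have hAt : HasDerivAt (fun s => ptE u s x) (H (1, 0) (1, 0)) t := by
    simp only [hpt]; exact hVt (1, 0)
  have hBt : ∀ i : Fin 3, HasDerivAt (fun s => pxE i u s x) (H (1, 0) (ee i)) t := by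
    intro i; simp only [hpx]; exact hVt (ee i)
  have hCt : HasDerivAt (fun s => u s x) (ptE u t x) t := by
    rw [hpt]; exact hptD t x
  -- energy sum derivative
  have hsum : HasDerivAt (fun s => ptE u s x ^ 2
        + (pxE 0 u s x ^ 2 + pxE 1 u s x ^ 2 + pxE 2 u s x ^ 2) + u s x ^ 2)
      (2 * ptE u t x * H (1,0) (1,0)
        + (2 * pxE 0 u t x * H (1,0) (ee 0) + 2 * pxE 1 u t x * H (1,0) (ee 1)
            + 2 * pxE 2 u t x * H (1,0) (ee 2))
        + 2 * u t x * ptE u t x) t := by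
    have h1 := hAt.pow 2
    have h2 := (hBt 0).pow 2
    have h3 := (hBt 1).pow 2
    have h4 := (hBt 2).pow 2
    have h5 := hCt.pow 2
    have hs : HasDerivAt (fun s => ptE u s x ^ 2
          + (pxE 0 u s x ^ 2 + pxE 1 u s x ^ 2 + pxE 2 u s x ^ 2) + u s x ^ 2) _ t :=
      (h1.add ((h2.add h3).add h4)).add h5
    convert hs using 1
    push_cast
    ring
  have e1 : ptE (fun s y => Real.exp (qw δ s ‖y‖) *
        (ptE u s y ^ 2 + (pxE 0 u s y ^ 2 + pxE 1 u s y ^ 2 + pxE 2 u s y ^ 2) + u s y ^ 2)) t x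
      = Real.exp (qw δ t ‖x‖) * -(jb (‖x‖ - t) ^ (-(1 + 2 * δ)))
          * (ptE u t x ^ 2 + (pxE 0 u t x ^ 2 + pxE 1 u t x ^ 2 + pxE 2 u t x ^ 2) + u t x ^ 2)
        + Real.exp (qw δ t ‖x‖) * (2 * ptE u t x * H (1,0) (1,0)
            + (2 * pxE 0 u t x * H (1,0) (ee 0) + 2 * pxE 1 u t x * H (1,0) (ee 1)
                + 2 * pxE 2 u t x * H (1,0) (ee 2))
            + 2 * u t x * ptE u t x) := by
    exact (hexp_t.mul hsum).deriv
  -- spatial derivatives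
  have hnorm : HasFDerivAt (fun y : Sp => ‖y‖)
      ((1 / (2 * Real.sqrt (‖x‖ ^ 2))) • (2 • (innerSL ℝ x))) x := by
    have hns := (hasStrictFDerivAt_norm_sq x).hasFDerivAt
    have hsqx : HasDerivAt Real.sqrt (1 / (2 * Real.sqrt (‖x‖ ^ 2))) (‖x‖ ^ 2) :=
      Real.hasDerivAt_sqrt (by positivity)
    have h0 : HasFDerivAt (fun y : Sp => Real.sqrt (‖y‖ ^ 2))
        ((1 / (2 * Real.sqrt (‖x‖ ^ 2))) • (2 • (innerSL ℝ x))) x :=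
      hsqx.comp_hasFDerivAt x hns
    have heqf : (fun y : Sp => Real.sqrt (‖y‖ ^ 2)) = fun y : Sp => ‖y‖ :=
      funext fun y => Real.sqrt_sq (norm_nonneg y)
    rw [heqf] at h0
    exact h0
  set N : Sp →L[ℝ] ℝ := (1 / (2 * Real.sqrt (‖x‖ ^ 2))) • (2 • (innerSL ℝ x)) with hN
  have hNval : ∀ a : Fin 3, N (EuclideanSpace.single a 1) = x a / ‖x‖ := by
    intro a
    rw [hN]
    simp [Real.sqrt_sq (norm_nonneg x), EuclideanSpace.inner_single_right]
    field_simp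
  have hq_x : HasFDerivAt (fun y : Sp => qw δ t ‖y‖)
      ((jb (‖x‖ - t) ^ (-(1 + 2 * δ))) • N) x := by
    have h := (hasDerivAt_Qf hδ (‖x‖ - t)).comp_hasFDerivAt x (hnorm.sub_const t)
    exact h
  have hexp_x : HasFDerivAt (fun y : Sp => Real.exp (qw δ t ‖y‖))
      (Real.exp (qw δ t ‖x‖) • ((jb (‖x‖ - t) ^ (-(1 + 2 * δ))) • N)) x := hq_x.exp
  have hAx : HasFDerivAt (fun y => ptE u t y)
      ((H.comp (ContinuousLinearMap.inr ℝ ℝ Sp)).flip ((1:ℝ), (0:Sp))) x := by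
    simp only [hpt]; exact hVx (1, 0)
  have hBx : ∀ i : Fin 3, HasFDerivAt (fun y => pxE i u t y)
      ((H.comp (ContinuousLinearMap.inr ℝ ℝ Sp)).flip (ee i)) x := by
    intro i; simp only [hpx]; exact hVx (ee i)
  -- spatial term, for each a
  have e2 : ∀ a : Fin 3,
      pxE a (fun s y => Real.exp (qw δ s ‖y‖) * (ptE u s y * pxE a u s y)) t x
        = Real.exp (qw δ t ‖x‖) * (jb (‖x‖ - t) ^ (-(1 + 2 * δ))) * (x a / ‖x‖)
            * (ptE u t x * pxE a u t x)
          + Real.exp (qw δ t ‖x‖) * (H (1,0) (ee a) * pxE a u t x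
              + ptE u t x * H (ee a) (ee a)) := by
    intro a
    have hbig := hexp_x.mul ((hAx).mul (hBx a))
    have hbig' : HasFDerivAt (fun y => Real.exp (qw δ t ‖y‖) * (ptE u t y * pxE a u t y)) _ x := hbig
    have hval := hbig'.fderiv
    show fderiv ℝ (fun y => Real.exp (qw δ t ‖y‖) * (ptE u t y * pxE a u t y)) x
        (EuclideanSpace.single a 1) = _
    rw [hval]
    simp only [ContinuousLinearMap.add_apply, ContinuousLinearMap.smul_apply, smul_eq_mul,
      hflipval, hNval, Pi.mul_apply]
    rw [hsymm (ee a) (1, 0)]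
    ring
  -- the PDE at (t,x)
  have hGeq : H (1,0) (1,0) - (H (ee 0) (ee 0) + H (ee 1) (ee 1) + H (ee 2) (ee 2)) + u t x
      = G t x := by
    have h : ptE (ptE u) t x - (∑ i : Fin 3, pxE i (pxE i u) t x) + u t x = G t x := heq t x
    have h1 : ptE (ptE u) t x = H (1,0) (1,0) := hAt.deriv
    have h2 : ∀ i : Fin 3, pxE i (pxE i u) t x = H (ee i) (ee i) := by
      intro i
      show fderiv ℝ (fun y => pxE i u t y) x (EuclideanSpace.single i 1) = _
      rw [(hBx i).fderiv]
      exact hflipval (ee i) i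
    simp only [Fin.sum_univ_three, h1, h2] at h
    exact h
  -- norm identity
  have hxsum : (x 0) ^ 2 + (x 1) ^ 2 + (x 2) ^ 2 = ‖x‖ ^ 2 := by
    have h := EuclideanSpace.norm_eq x
    rw [h, Real.sq_sqrt (by positivity)]
    simp [Fin.sum_univ_three, sq_abs]
  have hw : (x 0 / ‖x‖) ^ 2 + (x 1 / ‖x‖) ^ 2 + (x 2 / ‖x‖) ^ 2 = 1 := by
    field_simp
    linear_combination hxsum
  have hjb : (jb (‖x‖ - t)) ^ ((1:ℝ) + 2 * δ) = (jb (‖x‖ - t) ^ (-(1 + 2 * δ)))⁻¹ := by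
    rw [← Real.rpow_neg (jb_pos _).le]
    simp
  have hg0 : jb (‖x‖ - t) ^ (-(1 + 2 * δ)) ≠ 0 := (Real.rpow_pos_of_pos (jb_pos _) _).ne'
  have hjb2 : Real.exp (qw δ t ‖x‖) / (2 * (jb (‖x‖ - t)) ^ ((1 : ℝ) + 2 * δ))
      = Real.exp (qw δ t ‖x‖) * (jb (‖x‖ - t) ^ (-(1 + 2 * δ))) / 2 := by
    rw [hjb]
    field_simp
  rw [e1, e2 0, e2 1, e2 2, hjb2, ← hGeq]
  linear_combination (Real.exp (qw δ t ‖x‖) * jb (‖x‖ - t) ^ (-(1 + 2 * δ))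
      * ptE u t x ^ 2 / 2) * hw
end
end
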